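/- arXiv:1606.06939 — 5 statements merged into one kernel-verified Lean document; each statement's English description precedes it below -/
import Mathlib

section
/- Fix $e\ge2$ and a prime $p$. For $y\ge0$ write its $(e,p)$-expansion $y=(a_sp^s+\cdots+a_1p+a_0)e+l-1$ with $0\le l<e$, $0\le a_i<p$ and $a_s>0$ if $y\ge e-1$. Let $\mu=(2^x,1^y)$ be $e$-restricted and $\lambda=(2^u,1^v)$ a partition of the same number $n$. Define $f^q_{e,p}(l',s')$ for nonnegative integers: $1$ if $\lfloor s'/e\rfloor\preceq_p\lfloor(l'+1)/e\rfloor$ and $e\mid s'$; $q$ if $\lfloor s'/e\rfloor\preceq_p\lfloor(l'+1)/e\rfloor$, $e\mid l'+1-s'$ and $e\nmid s'$; $0$ otherwise; where $b\preceq_p a$ means every base-$p$ digit of $b$ is either $0$ or equals the corresponding digit of $a$. Then $f^q_{e,p}(y,u-x)\ne0$ if and only if $v=(a_sp^s\pm a_{s-1}p^{s-1}\pm\cdots\pm a_1p\pm a_0)e\pm l-1$ for some choice of signs; and in that case $f^q_{e,p}(y,u-x)=1$ if $l=0$, or if $0<l<e$ and the sign on $l$ is $+$; and $f^q_{e,p}(y,u-x)=q$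 if $0<l<e$ and the sign on $l$ is $-$. -/
open scoped Classical
noncomputable section

/-- `b ⪯_p a`: every base-`p` digit of `b` is either `0` or equals the
corresponding digit of `a`. -/
def baseDom (p a b : ℕ) : Prop :=
  ∀ i : ℕ, b / p ^ i % p = 0 ∨ b / p ^ i % p = a / p ^ i % p

/-- The graded decomposition-number function `f^q_{e,p}`. -/
def fq (e p l s : ℕ) : Polynomial ℤ :=
  if baseDom p ((l + 1) / e) (s / e) ∧ e ∣ s then 1
  else if baseDom p ((l + 1) / e) (s / e) ∧ ((l : ℤ) + 1 - (s : ℤ)) % e = 0 ∧ ¬ e ∣ s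
    then Polynomial.X
  else 0

namespace Stmt13Aux

lemma sum_digits_lt (p : ℕ) (hp : 1 < p) (b : ℕ → ℕ) (k : ℕ) (hb : ∀ i < k, b i < p) :
    ∑ i ∈ Finset.range k, b i * p ^ i < p ^ k := by
  induction k with
  | zero => simp
  | succ k ih =>
    have h1 := ih (fun i hi => hb i (by omega))
    have h2 : b k + 1 ≤ p := hb k (by omega)
    have h3 : b k * p ^ k + p ^ k ≤ p ^ k * p := by
      calc b k * p ^ k + p ^ k = (b k + 1) * p ^ k := by ring
        _ ≤ p * p ^ k := Nat.mul_le_mul_right _ h2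
        _ = p ^ k * p := mul_comm _ _
    rw [Finset.sum_range_succ, pow_succ]
    omega

lemma digit_expand (p k D : ℕ) :
    (∑ i ∈ Finset.range k, D / p ^ i % p * p ^ i) + D / p ^ k * p ^ k = D := by
  induction k with
  | zero => simp
  | succ k ih =>
    rw [Finset.sum_range_succ]
    have hx : D / p ^ k % p + p * (D / p ^ k / p) = D / p ^ k := Nat.mod_add_div _ _
    have hdiv : D / p ^ (k + 1) = D / p ^ k / p := by
      rw [pow_succ, Nat.div_div_eq_div_mul]
    rw [hdiv, pow_succ]
    calc ∑ i ∈ Finset.range k, D / p ^ i % p * p ^ i + D / p ^ k % p * p ^ k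
          + D / p ^ k / p * (p ^ k * p)
        = ∑ i ∈ Finset.range k, D / p ^ i % p * p ^ i
          + (D / p ^ k % p + p * (D / p ^ k / p)) * p ^ k := by ring
      _ = ∑ i ∈ Finset.range k, D / p ^ i % p * p ^ i + D / p ^ k * p ^ k := by rw [hx]
      _ = D := ih

lemma sum_digit (p : ℕ) (hp : 1 < p) (b : ℕ → ℕ) (k : ℕ) (hb : ∀ i < k, b i < p) (j : ℕ) :
    (∑ i ∈ Finset.range k, b i * p ^ i) / p ^ j % p = if j < k then b j else 0 := by
  have hp0 : 0 < p := by omega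
  induction k with
  | zero => simp
  | succ k ih =>
    have hbk := hb k (by omega)
    have hS : ∑ i ∈ Finset.range k, b i * p ^ i < p ^ k :=
      sum_digits_lt p hp b k (fun i hi => hb i (by omega))
    rw [Finset.sum_range_succ]
    rcases lt_trichotomy j k with hj | hj | hj
    · have hks : b k * p ^ k = b k * p ^ (k - j) * p ^ j := by
        rw [mul_assoc, ← pow_add]
        congr 2
        omega
      rw [hks, Nat.add_mul_div_right _ _ (pow_pos hp0 j)]
      have hkj : b k * p ^ (k - j) = b k * p ^ (k - j - 1) * p := by
        rw [mul_assoc, ← pow_succ]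
        congr 2
        omega
      rw [hkj, Nat.add_mul_mod_self_right, ih (fun i hi => hb i (by omega)), if_pos hj,
        if_pos (by omega : j < k + 1)]
    · subst hj
      rw [Nat.add_mul_div_right _ _ (pow_pos hp0 j), Nat.div_eq_of_lt hS, zero_add,
        Nat.mod_eq_of_lt hbk, if_pos (by omega : j < j + 1)]
    · have htot : ∑ i ∈ Finset.range k, b i * p ^ i + b k * p ^ k < p ^ (k + 1) := by
        have := sum_digits_lt p hp b (k + 1) hb
        rwa [Finset.sum_range_succ] at this
      have hle : p ^ (k + 1) ≤ p ^ j := Nat.pow_le_pow_right (by omega) (by omega)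
      rw [Nat.div_eq_of_lt (lt_of_lt_of_le htot hle), Nat.zero_mod, if_neg (by omega)]

lemma sign_sum_eq (s : ℕ) (pz : ℤ) (az cz : ℕ → ℤ) (ε : ℕ → ℤ)
    (hc : ∀ i < s, (ε i = 1 ∧ cz i = 0) ∨ (ε i = -1 ∧ cz i = az i)) :
    (∑ j ∈ Finset.range (s + 1), az j * pz ^ j) - 2 * ∑ i ∈ Finset.range s, cz i * pz ^ i
      = az s * pz ^ s + ∑ i ∈ Finset.range s, ε i * az i * pz ^ i := by
  have key : ∀ i ∈ Finset.range s, az i * pz ^ i - 2 * (cz i * pz ^ i) = ε i * az i * pz ^ i := by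
    intro i hi
    rcases hc i (Finset.mem_range.mp hi) with ⟨h1, h2⟩ | ⟨h1, h2⟩ <;> rw [h1, h2] <;> ring
  have key2 := Finset.sum_congr rfl key
  rw [Finset.sum_sub_distrib, ← Finset.mul_sum] at key2
  rw [Finset.sum_range_succ]
  linarith [key2]

lemma forward_core (p s : ℕ) (hp : 1 < p) (a : ℕ → ℕ) (hai : ∀ i ≤ s, a i < p)
    (A : ℕ) (hA : A = ∑ j ∈ Finset.range (s + 1), a j * p ^ j)
    (D : ℕ) (hbd : baseDom p A D) (h2D : 2 * D ≤ A) :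
    ∃ ε : ℕ → ℤ, (∀ i, ε i = 1 ∨ ε i = -1) ∧
      (A : ℤ) - 2 * (D : ℤ) = (a s : ℤ) * (p : ℤ) ^ s +
        ∑ i ∈ Finset.range s, ε i * (a i : ℤ) * (p : ℤ) ^ i := by
  have hp0 : 0 < p := by omega
  have hAdig : ∀ j, A / p ^ j % p = if j < s + 1 then a j else 0 := by
    rw [hA]; exact sum_digit p hp a (s + 1) (fun i hi => hai i (by omega))
  have hAlt : A < p ^ (s + 1) := by
    rw [hA]; exact sum_digits_lt p hp a (s + 1) (fun i hi => hai i (by omega))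
  have hDlt : D < p ^ (s + 1) := by omega
  have hDexp : (∑ i ∈ Finset.range (s + 1), D / p ^ i % p * p ^ i) = D := by
    have h := digit_expand p (s + 1) D
    rw [Nat.div_eq_of_lt hDlt] at h
    simpa using h
  have hdig : ∀ i, i ≤ s → D / p ^ i % p = 0 ∨ D / p ^ i % p = a i := by
    intro i hi
    rcases hbd i with h | h
    · exact Or.inl h
    · right; rw [h, hAdig i, if_pos (by omega)]
  have hds : D / p ^ s % p = 0 := by
    rcases hdig s le_rfl with h | h
    · exact h
    rcases Nat.eq_zero_or_pos (a s) with has | has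
    · rw [h, has]
    exfalso
    have hge : a s * p ^ s ≤ D := by
      calc a s * p ^ s = D / p ^ s % p * p ^ s := by rw [h]
        _ ≤ ∑ i ∈ Finset.range (s + 1), D / p ^ i % p * p ^ i :=
            Finset.single_le_sum (f := fun i => D / p ^ i % p * p ^ i)
              (fun i _ => Nat.zero_le _) (Finset.self_mem_range_succ s)
        _ = D := hDexp
    have hss : ∑ j ∈ Finset.range s, a j * p ^ j < p ^ s :=
      sum_digits_lt p hp a s (fun i hi => hai i (by omega))
    have hAub : A < p ^ s + a s * p ^ s := by
      rw [hA, Finset.sum_range_succ]; omega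
    have hps : p ^ s ≤ a s * p ^ s := Nat.le_mul_of_pos_left _ has
    omega
  have hDexp' : (∑ i ∈ Finset.range s, D / p ^ i % p * p ^ i) = D := by
    rw [Finset.sum_range_succ, hds] at hDexp
    simpa using hDexp
  refine ⟨fun i => if D / p ^ i % p = 0 then 1 else -1,
    fun i => by by_cases h : D / p ^ i % p = 0 <;> simp [h], ?_⟩
  have hAZ : (A : ℤ) = ∑ j ∈ Finset.range (s + 1), (a j : ℤ) * (p : ℤ) ^ j := by
    rw [hA]; push_cast; ring
  have hDZ : (D : ℤ) = ∑ i ∈ Finset.range s, ((D / p ^ i % p : ℕ) : ℤ) * (p : ℤ) ^ i := by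
    conv_lhs => rw [← hDexp']
    push_cast; ring
  rw [hAZ, hDZ]
  refine sign_sum_eq s (p : ℤ) (fun i => (a i : ℤ)) (fun i => ((D / p ^ i % p : ℕ) : ℤ))
    (fun i => if D / p ^ i % p = 0 then 1 else -1) ?_
  intro i hi
  by_cases h : D / p ^ i % p = 0
  · left; exact ⟨if_pos h, by simp [h]⟩
  · right
    rcases hdig i (by omega) with h' | h'
    · exact absurd h' h
    · exact ⟨if_neg h, by simp [h']⟩

lemma backward_core (p s : ℕ) (hp : 1 < p) (a : ℕ → ℕ) (hai : ∀ i ≤ s, a i < p)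
    (A : ℕ) (hA : A = ∑ j ∈ Finset.range (s + 1), a j * p ^ j)
    (ε : ℕ → ℤ) (hε : ∀ i, ε i = 1 ∨ ε i = -1)
    (D : ℕ) (hD : D = ∑ i ∈ Finset.range s, (if ε i = -1 then a i else 0) * p ^ i) :
    baseDom p A D ∧
      (A : ℤ) - 2 * (D : ℤ) = (a s : ℤ) * (p : ℤ) ^ s +
        ∑ i ∈ Finset.range s, ε i * (a i : ℤ) * (p : ℤ) ^ i := by
  have hb : ∀ i < s, (if ε i = -1 then a i else 0) < p := by
    intro i hi
    split
    · exact hai i (by omega)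
    · omega
  have hAdig : ∀ j, A / p ^ j % p = if j < s + 1 then a j else 0 := by
    rw [hA]; exact sum_digit p hp a (s + 1) (fun i hi => hai i (by omega))
  have hDdig : ∀ j, D / p ^ j % p = if j < s then (if ε j = -1 then a j else 0) else 0 := by
    rw [hD]; exact sum_digit p hp _ s hb
  constructor
  · intro j
    rw [hDdig j, hAdig j]
    by_cases hj : j < s
    · rw [if_pos hj, if_pos (by omega : j < s + 1)]
      rcases hε j with h | h
      · left; rw [if_neg (by rw [h]; norm_num)]
      · right; rw [if_pos h]
    · left; rw [if_neg hj]
  · have hAZ : (A : ℤ) = ∑ j ∈ Finset.range (s + 1), (a j : ℤ) * (p : ℤ) ^ j := by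
      rw [hA]; push_cast; ring
    have hDZ : (D : ℤ) = ∑ i ∈ Finset.range s,
        (((if ε i = -1 then a i else 0 : ℕ)) : ℤ) * (p : ℤ) ^ i := by
      rw [hD]; push_cast; ring
    rw [hAZ, hDZ]
    refine sign_sum_eq s (p : ℤ) (fun i => (a i : ℤ))
      (fun i => (((if ε i = -1 then a i else 0 : ℕ)) : ℤ)) ε ?_
    intro i hi
    rcases hε i with h | h
    · left; exact ⟨h, by norm_num [h]⟩
    · right; exact ⟨h, by simp [h]⟩

end Stmt13Aux

open Stmt13Aux

theorem stmt13 (e p : ℕ) (he : 2 ≤ e) (hp : p.Prime)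
    (y x u v n s l : ℕ) (a : ℕ → ℕ)
    -- the (e,p)-expansion of y: y = (a_s p^s + ⋯ + a_0) e + l - 1
    (hexp : y + 1 = (∑ i ∈ Finset.range (s + 1), a i * p ^ i) * e + l)
    (hl : l < e) (hai : ∀ i ≤ s, a i < p) (hlead : e - 1 ≤ y → 0 < a s)
    -- μ = (2^x, 1^y) is e-restricted
    (hres : 0 < y ∨ x = 0 ∨ 2 < e)
    -- λ = (2^u, 1^v) is a partition of the same n, with u ≥ x
    (hn : n = 2 * x + y) (hn' : n = 2 * u + v) (hux : x ≤ u) :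
    (fq e p y (u - x) ≠ 0 ↔
      ∃ (ε : ℕ → ℤ) (εl : ℤ), (∀ i, ε i = 1 ∨ ε i = -1) ∧ (εl = 1 ∨ εl = -1) ∧
        (v : ℤ) + 1 =
          ((a s : ℤ) * (p : ℤ) ^ s +
              ∑ i ∈ Finset.range s, ε i * (a i : ℤ) * (p : ℤ) ^ i) * e + εl * l) ∧
    (∀ (ε : ℕ → ℤ) (εl : ℤ), (∀ i, ε i = 1 ∨ ε i = -1) → (εl = 1 ∨ εl = -1) →
      (v : ℤ) + 1 =
          ((a s : ℤ) * (p : ℤ) ^ s +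
              ∑ i ∈ Finset.range s, ε i * (a i : ℤ) * (p : ℤ) ^ i) * e + εl * l →
      ((l = 0 → fq e p y (u - x) = 1) ∧
       (0 < l → εl = 1 → fq e p y (u - x) = 1) ∧
       (0 < l → εl = -1 → fq e p y (u - x) = Polynomial.X))) := by
  have hp1 : 1 < p := hp.one_lt
  have he0 : 0 < e := by omega
  set d := u - x with hddef
  have hyd : y = 2 * d + v := by omega
  set A := ∑ i ∈ Finset.range (s + 1), a i * p ^ i with hAdef
  have hyA : y + 1 = A * e + l := hexp
  have hAq : (y + 1) / e = A := by
    rw [hyA, mul_comm, Nat.mul_add_div he0, Nat.div_eq_of_lt hl, add_zero]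
  have hy1 : (y : ℤ) + 1 = (A : ℤ) * (e : ℤ) + (l : ℤ) := by exact_mod_cast hyA
  have hy2 : (y : ℤ) = 2 * (d : ℤ) + (v : ℤ) := by exact_mod_cast hyd
  have hval : ∀ (ε : ℕ → ℤ) (εl : ℤ), (∀ i, ε i = 1 ∨ ε i = -1) → (εl = 1 ∨ εl = -1) →
      (v : ℤ) + 1 = ((a s : ℤ) * (p : ℤ) ^ s +
          ∑ i ∈ Finset.range s, ε i * (a i : ℤ) * (p : ℤ) ^ i) * (e : ℤ) + εl * (l : ℤ) →
      fq e p y d = if 0 < l ∧ εl = -1 then Polynomial.X else 1 := by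
    intro ε εl hε hεl heq
    set D := ∑ i ∈ Finset.range s, (if ε i = -1 then a i else 0) * p ^ i with hDdef
    obtain ⟨hbd, hM⟩ := backward_core p s hp1 a hai A hAdef ε hε D hDdef
    have h2d : 2 * (d : ℤ) = 2 * (D : ℤ) * (e : ℤ) + (1 - εl) * (l : ℤ) := by
      linear_combination hy1 - hy2 - heq + (e : ℤ) * hM
    have hfq1 : d = D * e → fq e p y d = 1 := by
      intro hde
      have hdvd : e ∣ d := hde ▸ dvd_mul_left e D
      have hdiv : d / e = D := by rw [hde, Nat.mul_div_cancel _ he0]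
      unfold fq
      rw [if_pos ⟨by rw [hAq, hdiv]; exact hbd, hdvd⟩]
    rcases hεl with h1 | h1
    · subst h1
      have hde : d = D * e := by
        have h : (d : ℤ) = (D : ℤ) * (e : ℤ) := by linarith
        exact_mod_cast h
      rw [hfq1 hde, if_neg (by rintro ⟨-, h2⟩; norm_num at h2)]
    · subst h1
      rcases Nat.eq_zero_or_pos l with hl0 | hlpos
      · have hde : d = D * e := by
          have hlz : (l : ℤ) = 0 := by exact_mod_cast hl0
          have h : (d : ℤ) = (D : ℤ) * (e : ℤ) := by
            rw [hlz] at h2d; linarith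
          exact_mod_cast h
        rw [hfq1 hde, if_neg (by rintro ⟨h2, -⟩; omega)]
      · have hde : d = D * e + l := by
          have h : (d : ℤ) = (D : ℤ) * (e : ℤ) + (l : ℤ) := by linarith
          exact_mod_cast h
        have hmod : d % e = l := by
          rw [hde, add_comm, mul_comm, Nat.add_mul_mod_self_left, Nat.mod_eq_of_lt hl]
        have hndvd : ¬ e ∣ d := by
          intro hdvd
          obtain ⟨c, hc⟩ := hdvd
          rw [hc, Nat.mul_mod_right] at hmod
          omega
        have hdiv : d / e = D := by
          rw [hde, add_comm, Nat.add_mul_div_right _ _ he0, Nat.div_eq_of_lt hl, zero_add]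
        have hdz : (d : ℤ) = (D : ℤ) * (e : ℤ) + (l : ℤ) := by exact_mod_cast hde
        have hye : ((y : ℤ) + 1 - (d : ℤ)) % (e : ℤ) = 0 := by
          have h5 : (y : ℤ) + 1 - (d : ℤ) = ((A : ℤ) - (D : ℤ)) * (e : ℤ) := by
            linear_combination hy1 - hdz
          rw [h5]
          exact Int.mul_emod_left _ _
        rw [if_pos ⟨hlpos, rfl⟩]
        unfold fq
        rw [if_neg (fun h => hndvd h.2),
          if_pos ⟨by rw [hAq, hdiv]; exact hbd, hye, hndvd⟩]
  refine ⟨⟨?_, ?_⟩, ?_⟩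
  · -- forward direction
    intro h0
    unfold fq at h0
    split_ifs at h0 with hc1 hc2
    · obtain ⟨hbd, hdvd⟩ := hc1
      rw [hAq] at hbd
      obtain ⟨D, hde⟩ := hdvd
      have hdiv : d / e = D := by rw [hde, Nat.mul_div_cancel_left _ he0]
      rw [hdiv] at hbd
      have hyge : 2 * (e * D) ≤ y := by rw [← hde]; omega
      have h2D : 2 * D ≤ A := by
        by_contra hcon
        push_neg at hcon
        have hconZ : (A : ℤ) + 1 ≤ 2 * (D : ℤ) := by exact_mod_cast hcon
        have hprod : ((A : ℤ) + 1) * (e : ℤ) ≤ 2 * (D : ℤ) * (e : ℤ) :=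
          mul_le_mul_of_nonneg_right hconZ (by positivity)
        have hygeZ : 2 * ((e : ℤ) * (D : ℤ)) ≤ (y : ℤ) := by exact_mod_cast hyge
        have hlZ : (l : ℤ) < (e : ℤ) := by exact_mod_cast hl
        linarith
      obtain ⟨ε, hε, hM⟩ := forward_core p s hp1 a hai A hAdef D hbd h2D
      have hy3 : (d : ℤ) = (e : ℤ) * (D : ℤ) := by exact_mod_cast hde
      exact ⟨ε, 1, hε, Or.inl rfl, by
        linear_combination hy1 - hy2 - 2 * hy3 + (e : ℤ) * hM⟩
    · obtain ⟨hbd, hmodZ, hndvd⟩ := hc2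
      rw [hAq] at hbd
      have hdley : d ≤ y := by omega
      set m := y + 1 - d with hm
      have hmz : (m : ℤ) = (y : ℤ) + 1 - (d : ℤ) := by omega
      rw [← hmz] at hmodZ
      have hedvd : e ∣ m := by
        have : (e : ℤ) ∣ (m : ℤ) := Int.dvd_of_emod_eq_zero hmodZ
        exact_mod_cast this
      obtain ⟨c, hc⟩ := hedvd
      have h6 : d + m = y + 1 := by omega
      have hsum : d + e * c = A * e + l := by rw [← hc, h6, hyA]
      have h7 : (A * e + l) % e = l := by
        rw [mul_comm, Nat.mul_add_mod, Nat.mod_eq_of_lt hl]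
      have hmod : d % e = l := by
        rw [← Nat.add_mul_mod_self_left d e c, hsum, h7]
      have h8 := Nat.div_add_mod d e
      rw [hmod, mul_comm e (d / e)] at h8
      set D := d / e with hDdef
      have hde : d = D * e + l := h8.symm
      have hyge : 2 * d ≤ y := by omega
      have hy3 : (d : ℤ) = (D : ℤ) * (e : ℤ) + (l : ℤ) := by exact_mod_cast hde
      have h2D : 2 * D ≤ A := by
        by_contra hcon
        push_neg at hcon
        have hconZ : (A : ℤ) + 1 ≤ 2 * (D : ℤ) := by exact_mod_cast hcon
        have hprod : ((A : ℤ) + 1) * (e : ℤ) ≤ 2 * (D : ℤ) * (e : ℤ) :=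
          mul_le_mul_of_nonneg_right hconZ (by positivity)
        have hygeZ : 2 * (d : ℤ) ≤ (y : ℤ) := by exact_mod_cast hyge
        have hlZ : (l : ℤ) < (e : ℤ) := by exact_mod_cast hl
        linarith
      obtain ⟨ε, hε, hM⟩ := forward_core p s hp1 a hai A hAdef D hbd h2D
      exact ⟨ε, -1, hε, Or.inr rfl, by
        linear_combination hy1 - hy2 - 2 * hy3 + (e : ℤ) * hM⟩
    · exact absurd rfl h0
  · -- backward direction
    rintro ⟨ε, εl, hε, hεl, heq⟩
    rw [hval ε εl hε hεl heq]
    split_ifs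
    · exact Polynomial.X_ne_zero
    · exact one_ne_zero
  · -- values
    intro ε εl hε hεl heq
    have hfq := hval ε εl hε hεl heq
    refine ⟨fun hl0 => ?_, fun hlp h1 => ?_, fun hlp h1 => ?_⟩
    · rw [hfq, if_neg (by rintro ⟨h, -⟩; omega)]
    · rw [hfq, if_neg (by rintro ⟨-, h2⟩; rw [h1] at h2; norm_num at h2)]
    · rw [hfq, if_pos ⟨hlp, h1⟩]
end
end

section
/- Fix $e\ge2$. Let $\pi$ be a nonnegative $\pm1$-path on $[u,v]$ with $\pi(u),\pi(v)\in H=\{me-1:m\in\mathbb Z_{>0}\}$, and suppose that for some $m\in\mathbb Z_{>0}$ the reflected path $s_m\cdot\pi$, defined by $(s_m\cdot\pi)(a)=2(me-1)-\pi(a)$, is also nonnegative. Then $\deg_e(s_m\cdot\pi)=-\deg_e(\pi)$. -/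
open scoped Classical
noncomputable section

def isWall (e x : ℤ) : Prop := 0 < x + 1 ∧ (x + 1) % e = 0

def degStep (e u v : ℤ) : ℤ :=
  if isWall e u ∧ v < u then 1
  else if isWall e v ∧ v < u then -1
  else 0

def pathDeg (e : ℤ) (π : ℕ → ℤ) (r s : ℕ) : ℤ :=
  ∑ a ∈ Finset.Ico r s, degStep e (π a) (π (a + 1))

/-- A nonnegative `±1`-path on the interval `[u,v]`. -/
def IsPathOn (π : ℕ → ℤ) (u v : ℕ) : Prop :=
  (∀ a, u ≤ a → a ≤ v → 0 ≤ π a) ∧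
  (∀ a, u ≤ a → a < v → π (a + 1) = π a + 1 ∨ π (a + 1) = π a - 1)

/-- `π[r,s]` is a positive arc (within `[u,v]`). -/
def IsPosArc (e : ℤ) (π : ℕ → ℤ) (u v r s : ℕ) : Prop :=
  u ≤ r ∧ r < s ∧ s ≤ v ∧ isWall e (π r) ∧ π s = π r ∧
    ∀ c, r < c → c < s → π r < π c ∧ π c < π r + e

/-- `π[r,s]` is a negative arc (within `[u,v]`). -/
def IsNegArc (e : ℤ) (π : ℕ → ℤ) (u v r s : ℕ) : Prop :=
  u ≤ r ∧ r < s ∧ s ≤ v ∧ isWall e (π r) ∧ π s = π r ∧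
    ∀ c, r < c → c < s → π r - e < π c ∧ π c < π r

def posArcs (e : ℤ) (π : ℕ → ℤ) (u v : ℕ) : Set (ℕ × ℕ) :=
  {p | IsPosArc e π u v p.1 p.2}

def negArcs (e : ℤ) (π : ℕ → ℤ) (u v : ℕ) : Set (ℕ × ℕ) :=
  {p | IsNegArc e π u v p.1 p.2}


lemma wall_not_adj {e x : ℤ} (he : 2 ≤ e) (hx : isWall e x) : ¬ isWall e (x + 1) := by
  rintro ⟨_, h2⟩
  obtain ⟨_, h1⟩ := hx
  have d1 : e ∣ x + 1 := Int.dvd_of_emod_eq_zero h1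
  have d2 : e ∣ x + 1 + 1 := Int.dvd_of_emod_eq_zero h2
  have : e ∣ 1 := by
    have := dvd_sub d2 d1
    simpa using this
  have := Int.le_of_dvd one_pos this
  omega

lemma wall_refl {e w x : ℤ} (hwall : (w + 1) % e = 0)
    (hx0 : 0 ≤ x) (hx : x ≤ 2 * w) : isWall e (2 * w - x) ↔ isWall e x := by
  have dw : e ∣ w + 1 := Int.dvd_of_emod_eq_zero hwall
  have key : ∀ y : ℤ, (e ∣ y + 1) → e ∣ (2 * w - y) + 1 := by
    intro y hy
    have : (2 * w - y) + 1 = 2 * (w + 1) - (y + 1) := by ring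
    rw [this]
    exact dvd_sub (Dvd.dvd.mul_left dw 2) hy
  constructor
  · rintro ⟨h1, h2⟩
    refine ⟨by omega, Int.emod_eq_zero_of_dvd ?_⟩
    have := key (2 * w - x) (Int.dvd_of_emod_eq_zero h2)
    simpa using this
  · rintro ⟨h1, h2⟩
    exact ⟨by omega, Int.emod_eq_zero_of_dvd (key x (Int.dvd_of_emod_eq_zero h2))⟩

lemma degStep_up {e u v : ℤ} (h : u < v) : degStep e u v = 0 := by
  have : ¬ v < u := by omega
  simp [degStep, this]

lemma degStep_down {e u v : ℤ} (h : v < u) :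
    degStep e u v = if isWall e u then 1 else if isWall e v then -1 else 0 := by
  simp [degStep, h]

lemma step_sum {e w x y : ℤ} (he : 2 ≤ e) (hwall : (w + 1) % e = 0)
    (hx0 : 0 ≤ x) (hx : x ≤ 2 * w) (hy0 : 0 ≤ y) (hy : y ≤ 2 * w)
    (hstep : y = x + 1 ∨ y = x - 1) :
    degStep e x y + degStep e (2 * w - x) (2 * w - y)
      = (if isWall e x then 1 else 0) - (if isWall e y then 1 else 0) := by
  have h1 : isWall e (2 * w - x) ↔ isWall e x := wall_refl hwall hx0 hx
  have h2 : isWall e (2 * w - y) ↔ isWall e y := wall_refl hwall hy0 hy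
  rcases hstep with h | h
  · subst h
    rw [degStep_up (by omega), degStep_down (by omega)]
    by_cases hxw : isWall e x
    · have hyn : ¬ isWall e (x + 1) := wall_not_adj he hxw
      simp [h1, h2, hxw, hyn]
    · simp only [h1, h2, hxw, if_false]
      split_ifs <;> ring
  · subst h
    rw [degStep_down (by omega), degStep_up (by omega)]
    by_cases hyw : isWall e (x - 1)
    · have hxn : ¬ isWall e x := by
        have := wall_not_adj he hyw
        simpa using this
      simp [hxn, hyw]
    · simp [hyw]

lemma telescope (f : ℕ → ℤ) (u v : ℕ) (huv : u ≤ v) :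
    ∑ a ∈ Finset.Ico u v, (f a - f (a + 1)) = f u - f v := by
  induction v, huv using Nat.le_induction with
  | base => simp
  | succ n hn ih => rw [Finset.sum_Ico_succ_top hn, ih]; ring

theorem stmt14 (e : ℤ) (he : 2 ≤ e) (u v : ℕ) (huv : u ≤ v) (π : ℕ → ℤ)
    (hpath : IsPathOn π u v) (hu : isWall e (π u)) (hv : isWall e (π v))
    (m : ℤ) (hm : 0 < m)
    (hnonneg : ∀ a, u ≤ a → a ≤ v → 0 ≤ 2 * (m * e - 1) - π a) :
    pathDeg e (fun a => 2 * (m * e - 1) - π a) u v = - pathDeg e π u v := by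
  set w : ℤ := m * e - 1 with hw
  have hwall : (w + 1) % e = 0 := by
    have : w + 1 = m * e := by omega
    rw [this]
    exact Int.mul_emod_left m e
  have key : ∀ a ∈ Finset.Ico u v,
      degStep e (π a) (π (a + 1)) + degStep e (2 * w - π a) (2 * w - π (a + 1))
        = (if isWall e (π a) then 1 else 0) - (if isWall e (π (a + 1)) then 1 else 0) := by
    intro a ha
    obtain ⟨ha1, ha2⟩ := Finset.mem_Ico.1 ha
    have hle : a + 1 ≤ v := ha2
    refine step_sum he hwall (hpath.1 a ha1 (by omega)) ?_
      (hpath.1 (a + 1) (by omega) hle) ?_ (hpath.2 a ha1 ha2)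
    · have := hnonneg a ha1 (by omega)
      omega
    · have := hnonneg (a + 1) (by omega) hle
      omega
  have hsum : pathDeg e π u v + pathDeg e (fun a => 2 * w - π a) u v
      = (if isWall e (π u) then 1 else 0) - (if isWall e (π v) then 1 else 0) := by
    rw [pathDeg, pathDeg, ← Finset.sum_add_distrib]
    rw [show (∑ a ∈ Finset.Ico u v, (degStep e (π a) (π (a + 1)) +
        degStep e (2 * w - π a) (2 * w - π (a + 1)))) =
        ∑ a ∈ Finset.Ico u v, ((if isWall e (π a) then (1 : ℤ) else 0) -
          (if isWall e (π (a + 1)) then 1 else 0)) from Finset.sum_congr rfl key]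
    exact telescope _ u v huv
  rw [if_pos hu, if_pos hv] at hsum
  omega
end
end

section
/- Fix $e\ge2$ and a characteristic parameter $p\in\{0\}\cup\{\text{primes}\}$. For two-column partitions, define $\operatorname{ch}_q\mathcal T=\sum_{\mathtt t\in\mathcal T}q^{\deg_e(\mathtt t)}\cdot\mathbf i^{\mathtt t}$ in the free $\mathbb Z[q,q^{-1}]$-module on $({\mathbb Z}/e)^n$, for any finite set $\mathcal T$ of standard tableaux of size $n$. Let $\operatorname{DStd}_{e,p}(\lambda)$ be the set of standard $\lambda$-tableaux fixed by $\operatorname{reg}_{ep^z}$ for all $z\ge0$ (just by $\operatorname{reg}_e$ when $p=0$). Then for any two-column partition $\lambda$ of $n$, the bar involution (sending $q\mapsto q^{-1}$) fixes $\operatorname{ch}_q\operatorname{DStd}_{e,p}(\lambda)$. Concretely: there is an involution $\iota$ of $\operatorname{DStd}_{e,p}(\lambda)$, obtained by reflecting every arc of the associated path in the wall where it begins and ends, satisfying $\mathbf i^{\iota(\mathtt t)}=\mathbf i^{\mathtt t}$ and $\deg_e(\iota(\mathtt t))=-\deg_e(\mathtt t)$. -/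
open scoped Classical
noncomputable section

def wallTimes (f : ℤ) (n : ℕ) (π : ℕ → ℤ) : Finset ℕ :=
  (Finset.range (n + 1)).filter fun a => isWall f (π a)

/-- The regularisation map on paths: reflect the tail after the last wall
visit upward in the wall, if the endpoint lies strictly below that wall. -/
def regPath (f : ℤ) (n : ℕ) (π : ℕ → ℤ) : ℕ → ℤ :=
  if h : (wallTimes f n π).Nonempty then
    let a := (wallTimes f n π).max' h
    if π n < π a then (fun b => if b ≤ a then π b else 2 * π a - π b) else π
  else π

/-- A standard tableau of size `n` (0-based nodes): injective, image is a
Young diagram (downward closed), entries increase along rows and columns. -/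
def IsStdTab (n : ℕ) (t : Fin n → ℕ × ℕ) : Prop :=
  Function.Injective t ∧
  (∀ r : Fin n, ∀ a b : ℕ, a ≤ (t r).1 → b ≤ (t r).2 → ∃ r' : Fin n, t r' = (a, b)) ∧
  (∀ r s : Fin n, (t r).1 ≤ (t s).1 → (t r).2 ≤ (t s).2 → r ≤ s)

/-- Number of entries among the first `a` entries lying in column `j`. -/
def cntCol (n : ℕ) (t : Fin n → ℕ × ℕ) (a j : ℕ) : ℕ :=
  (Finset.univ.filter fun r : Fin n => (r : ℕ) < a ∧ (t r).2 = j).card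

/-- The type-`A₁` path attached to a two-column tableau. -/
def pth (n : ℕ) (t : Fin n → ℕ × ℕ) (a : ℕ) : ℤ :=
  (cntCol n t a 0 : ℤ) - (cntCol n t a 1 : ℤ)

/-- Membership in the Young diagram of `(2^x, 1^y)` (0-based). -/
def memShape2 (x y : ℕ) (v : ℕ × ℕ) : Prop :=
  (v.1 < x ∧ v.2 < 2) ∨ (x ≤ v.1 ∧ v.1 < x + y ∧ v.2 = 0)

/-- The residue of a node (0-based): column minus row, mod `e`. -/
def resNode (e : ℕ) (v : ℕ × ℕ) : ZMod e := (v.2 : ZMod e) - (v.1 : ZMod e)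

/-- Membership in `DStd_{e,p}(λ)` for `λ = (2^x, 1^y)`: a standard tableau of
shape `λ` whose path is fixed by `reg_{e p^z}` for all `z ≥ 0` (when `p = 0`,
only `z = 0` gives a nontrivial condition, i.e. `reg_e`-fixedness). -/
def InDStd (e p n x y : ℕ) (t : Fin n → ℕ × ℕ) : Prop :=
  IsStdTab n t ∧ (∀ i, memShape2 x y (t i)) ∧
  ∀ z : ℕ, regPath ((e : ℤ) * (p : ℤ) ^ z) n (pth n t) = pth n t

/-!
A standard two-column tableau is the same as a nonnegative `±1`-path. Cut the path at its
visits to the walls `me - 1`. Between consecutive visits it either returns to the same wall (an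
arc, of degree `-1` if it lies above the wall and `+1` if below) or crosses to the neighbouring
wall (degree `0`); before the first visit and, by `reg_e`-fixedness, after the last one it
contributes degree `0` as well. Reflecting every arc swaps positive and negative arcs and fixes
the rest, so it negates the degree and is an involution. It fixes the walls, hence those of
`e p^z`, and the endpoint, so it preserves `DStd_{e,p}`. Within an arc based at `w` an up-step
becomes a down-step and its row shifts by `w`, which moves its residue by `w + 1 ≡ 0 (mod e)`.
-/

section Walls

variable {e : ℤ}

lemma isWall.dvd {x : ℤ} (h : isWall e x) : e ∣ x + 1 :=
  Int.dvd_of_emod_eq_zero h.2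

lemma isWall.of_dvd {f x : ℤ} (hef : e ∣ f) (h : isWall f x) : isWall e x :=
  ⟨h.1, Int.emod_eq_zero_of_dvd (hef.trans h.dvd)⟩

lemma isWall.sub_one_le {x : ℤ} (h : isWall e x) : e - 1 ≤ x := by
  have := Int.le_of_dvd h.1 h.dvd
  omega

lemma isWall.add_le {x y : ℤ} (hx : isWall e x) (hy : isWall e y) (hxy : x < y) :
    x + e ≤ y := by
  have := Int.le_of_dvd (by omega) (dvd_sub hy.dvd hx.dvd)
  omega

lemma not_isWall_of_near {w x : ℤ} (hw : isWall e w) (h1 : w - e < x) (h2 : x < w + e)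
    (hne : x ≠ w) : ¬ isWall e x := by
  intro hx
  rcases lt_or_gt_of_ne hne with h | h
  · have := hx.add_le hw h; omega
  · have := hw.add_le hx h; omega

lemma isWall.add_self {w : ℤ} (he : 0 ≤ e) (hw : isWall e w) : isWall e (w + e) := by
  have hd : e ∣ w + e + 1 := by simpa [add_right_comm] using dvd_add hw.dvd (dvd_refl e)
  exact ⟨by have := hw.1; omega, Int.emod_eq_zero_of_dvd hd⟩

lemma isWall.sub_self {w : ℤ} (hw : isWall e w) : w - e = -1 ∨ isWall e (w - e) := by
  rcases (hw.sub_one_le).eq_or_lt with h | h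
  · left; omega
  · right
    have hd : e ∣ w - e + 1 := by simpa [sub_add_eq_add_sub] using dvd_sub hw.dvd (dvd_refl e)
    exact ⟨by omega, Int.emod_eq_zero_of_dvd hd⟩

end Walls

lemma exists_le_lt_succ {f : ℕ → ℤ} {a b : ℕ} {v : ℤ} (hab : a ≤ b) (ha : f a ≤ v)
    (hb : v < f b) : ∃ c, a ≤ c ∧ c < b ∧ f c ≤ v ∧ v < f (c + 1) := by
  induction b, hab using Nat.le_induction with
  | base => omega
  | succ b hab ih =>
    by_cases h : v < f b
    · obtain ⟨c, h1, h2, h3⟩ := ih h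
      exact ⟨c, h1, by omega, h3⟩
    · exact ⟨b, hab, by omega, by omega, hb⟩

def EndsAboveLastWall (f : ℤ) (n : ℕ) (π : ℕ → ℤ) : Prop :=
  ∀ c ≤ n, isWall f (π c) → (∀ d, c < d → d ≤ n → ¬ isWall f (π d)) → π c ≤ π n

/-- Paths are extended constantly beyond `n`, as `pth` is, so that they can be compared as
functions. -/
structure IsPath (n : ℕ) (π : ℕ → ℤ) : Prop where
  start : π 0 = 0
  step : ∀ c < n, π (c + 1) = π c + 1 ∨ π (c + 1) = π c - 1
  flat : ∀ c, n ≤ c → π (c + 1) = π c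
  nonneg : ∀ c, 0 ≤ π c

structure IsRegularPath (e : ℤ) (n : ℕ) (π : ℕ → ℤ) : Prop extends IsPath n π where
  endsAbove : EndsAboveLastWall e n π

namespace IsPath

variable {n : ℕ} {π : ℕ → ℤ}

lemma exists_eq (H : IsPath n π) {a b : ℕ} {v : ℤ} (hab : a ≤ b) (hbn : b ≤ n)
    (hv : π a ≤ v ∧ v ≤ π b ∨ π b ≤ v ∧ v ≤ π a) : ∃ c, a ≤ c ∧ c ≤ b ∧ π c = v := by
  rcases eq_or_ne v (π b) with rfl | hvb
  · exact ⟨b, hab, le_rfl, rfl⟩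
  rcases hv with hv | hv
  · obtain ⟨c, h1, h2, h3, h4⟩ := exists_le_lt_succ hab hv.1 (lt_of_le_of_ne hv.2 hvb)
    have := H.step c (by omega)
    exact ⟨c, h1, h2.le, by omega⟩
  · obtain ⟨c, h1, h2, h3, h4⟩ :=
      exists_le_lt_succ (f := fun c => -π c) hab (neg_le_neg hv.2) (by omega)
    have := H.step c (by omega)
    exact ⟨c, h1, h2.le, by omega⟩

end IsPath

def WallFree (e : ℤ) (π : ℕ → ℤ) (a b : ℕ) : Prop :=
  ∀ c, a < c → c < b → ¬ isWall e (π c)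

def IsArc (e : ℤ) (π : ℕ → ℤ) (n r s : ℕ) : Prop :=
  IsPosArc e π 0 n r s ∨ IsNegArc e π 0 n r s

def InArc (e : ℤ) (n : ℕ) (π : ℕ → ℤ) (b : ℕ) : Prop :=
  ∃ r s, IsArc e π n r s ∧ r < b ∧ b < s

def reflectArcs (e : ℤ) (n : ℕ) (π : ℕ → ℤ) (b : ℕ) : ℤ :=
  if h : InArc e n π b then 2 * π h.choose - π b else π b

section Arcs

variable {e : ℤ} {n : ℕ} {π : ℕ → ℤ}

lemma eq_of_wallFree_of_overlap {a b r s c : ℕ} (ha : isWall e (π a)) (hb : isWall e (π b))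
    (hr : isWall e (π r)) (hs : isWall e (π s)) (hab : WallFree e π a b)
    (hrs : WallFree e π r s) (hac : a < c) (hcb : c < b) (hrc : r < c) (hcs : c < s) :
    a = r ∧ b = s := by
  constructor
  · by_contra hne
    rcases Nat.lt_or_gt_of_ne hne with h | h
    · exact hab r h (by omega) hr
    · exact hrs a h (by omega) ha
  · by_contra hne
    rcases Nat.lt_or_gt_of_ne hne with h | h
    · exact hrs b (by omega) h hb
    · exact hab s (by omega) h hs

namespace IsArc

variable {r s : ℕ}

lemma lt (h : IsArc e π n r s) : r < s := by
  rcases h with h | h <;> exact h.2.1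

lemma le (h : IsArc e π n r s) : s ≤ n := by
  rcases h with h | h <;> exact h.2.2.1

lemma isWall_left (h : IsArc e π n r s) : isWall e (π r) := by
  rcases h with h | h <;> exact h.2.2.2.1

lemma eq (h : IsArc e π n r s) : π s = π r := by
  rcases h with h | h <;> exact h.2.2.2.2.1

lemma isWall_right (h : IsArc e π n r s) : isWall e (π s) :=
  h.eq ▸ h.isWall_left

lemma interior_bounds (h : IsArc e π n r s) {c : ℕ} (h1 : r < c) (h2 : c < s) :
    π r - e < π c ∧ π c < π r + e ∧ π c ≠ π r := by
  rcases h with h | h <;> have := h.2.2.2.2.2 c h1 h2 <;> omega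

lemma wallFree (h : IsArc e π n r s) : WallFree e π r s := by
  intro c h1 h2
  obtain ⟨h3, h4, h5⟩ := h.interior_bounds h1 h2
  exact not_isWall_of_near h.isWall_left h3 h4 h5

lemma left_eq {r' s' b : ℕ} (h : IsArc e π n r s) (h' : IsArc e π n r' s') (h1 : r < b)
    (h2 : b < s) (h1' : r' < b) (h2' : b < s') : r = r' :=
  (eq_of_wallFree_of_overlap h.isWall_left h.isWall_right h'.isWall_left h'.isWall_right
    h.wallFree h'.wallFree h1 h2 h1' h2').1

end IsArc

lemma reflectArcs_of_not_inArc {b : ℕ} (h : ¬ InArc e n π b) : reflectArcs e n π b = π b :=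
  dif_neg h

lemma not_inArc_of_isWall {b : ℕ} (h : isWall e (π b)) : ¬ InArc e n π b :=
  fun ⟨_, _, ha, h1, h2⟩ => ha.wallFree b h1 h2 h

lemma not_inArc_of_le {b : ℕ} (hb : n ≤ b) : ¬ InArc e n π b :=
  fun ⟨_, _, ha, _, h2⟩ => by have := ha.le; omega

lemma reflectArcs_of_isWall {b : ℕ} (h : isWall e (π b)) : reflectArcs e n π b = π b :=
  reflectArcs_of_not_inArc (not_inArc_of_isWall h)

lemma IsArc.reflectArcs_eq {r s b : ℕ} (h : IsArc e π n r s) (h1 : r ≤ b) (h2 : b ≤ s) :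
    reflectArcs e n π b = 2 * π r - π b := by
  by_cases hb : InArc e n π b
  · rw [reflectArcs, dif_pos hb]
    obtain ⟨s', h', h1', h2'⟩ := hb.choose_spec
    have hr : r ≠ b := by rintro rfl; exact not_inArc_of_isWall h.isWall_left hb
    have hs : b ≠ s := by rintro rfl; exact not_inArc_of_isWall h.isWall_right hb
    rw [← h.left_eq h' (by omega) (by omega) h1' h2']
  · rw [reflectArcs_of_not_inArc hb]
    rcases eq_or_ne r b with rfl | hr
    · ring
    rcases eq_or_ne b s with rfl | hs
    · rw [h.eq]; ring
    exact absurd ⟨r, s, h, by omega, by omega⟩ hb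

lemma isWall_reflectArcs_iff {f : ℤ} (hef : e ∣ f) (b : ℕ) :
    isWall f (reflectArcs e n π b) ↔ isWall f (π b) := by
  by_cases hb : InArc e n π b
  · obtain ⟨r, s, h, h1, h2⟩ := hb
    obtain ⟨h3, h4, h5⟩ := h.interior_bounds h1 h2
    rw [h.reflectArcs_eq h1.le h2.le]
    have hnot : ¬ isWall e (2 * π r - π b) :=
      not_isWall_of_near h.isWall_left (by omega) (by omega) (by omega)
    exact iff_of_false (fun hw => hnot (hw.of_dvd hef))
      (fun hw => h.wallFree b h1 h2 (hw.of_dvd hef))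
  · rw [reflectArcs_of_not_inArc hb]

lemma isArc_reflectArcs {r s : ℕ} (h : IsArc e π n r s) : IsArc e (reflectArcs e n π) n r s := by
  have hr : reflectArcs e n π r = π r := reflectArcs_of_isWall h.isWall_left
  have hs : reflectArcs e n π s = π r := by rw [reflectArcs_of_isWall h.isWall_right, h.eq]
  have hc : ∀ c, r < c → c < s → reflectArcs e n π c = 2 * π r - π c :=
    fun c h1 h2 => h.reflectArcs_eq h1.le h2.le
  have hw := h.isWall_left
  rcases h with h | h
  · refine Or.inr ⟨h.1, h.2.1, h.2.2.1, by rwa [hr], by rw [hs, hr], fun c h1 h2 => ?_⟩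
    have := h.2.2.2.2.2 c h1 h2
    rw [hr, hc c h1 h2]
    omega
  · refine Or.inl ⟨h.1, h.2.1, h.2.2.1, by rwa [hr], by rw [hs, hr], fun c h1 h2 => ?_⟩
    have := h.2.2.2.2.2 c h1 h2
    rw [hr, hc c h1 h2]
    omega

lemma isPath_reflectArcs (H : IsPath n π) : IsPath n (reflectArcs e n π) where
  start := by rw [reflectArcs_of_not_inArc fun ⟨_, _, _, h, _⟩ => by omega, H.start]
  step c hc := by
    have := H.step c hc
    by_cases hin : InArc e n π c ∨ InArc e n π (c + 1)
    · obtain ⟨r, s, h, h1, h2⟩ | ⟨r, s, h, h1, h2⟩ := hin <;>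
        rw [h.reflectArcs_eq (b := c) (by omega) (by omega),
          h.reflectArcs_eq (b := c + 1) (by omega) (by omega)] <;> omega
    · rw [not_or] at hin
      rw [reflectArcs_of_not_inArc hin.1, reflectArcs_of_not_inArc hin.2]
      exact this
  flat c hc := by
    rw [reflectArcs_of_not_inArc (not_inArc_of_le hc),
      reflectArcs_of_not_inArc (not_inArc_of_le (by omega)), H.flat c hc]
  nonneg c := by
    by_cases hin : InArc e n π c
    · obtain ⟨r, s, h, h1, h2⟩ := hin
      have := h.interior_bounds h1 h2
      have := h.isWall_left.sub_one_le
      rw [h.reflectArcs_eq h1.le h2.le]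
      omega
    · rw [reflectArcs_of_not_inArc hin]
      exact H.nonneg c

lemma endsAboveLastWall_reflectArcs {f : ℤ} (hef : e ∣ f) (h : EndsAboveLastWall f n π) :
    EndsAboveLastWall f n (reflectArcs e n π) := by
  intro c hc hw hlater
  have hw' := (isWall_reflectArcs_iff hef c).1 hw
  rw [reflectArcs_of_isWall (hw'.of_dvd hef), reflectArcs_of_not_inArc (not_inArc_of_le le_rfl)]
  exact h c hc hw' fun d h1 h2 hd => hlater d h1 h2 ((isWall_reflectArcs_iff hef d).2 hd)

namespace IsPath

variable {a b : ℕ}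

lemma band_of_wallFree (H : IsPath n π) (he : 0 < e) (hab : a < b) (hbn : b ≤ n)
    (ha : isWall e (π a)) (hfree : WallFree e π a b) :
    (∀ c, a < c → c < b → π a < π c ∧ π c < π a + e) ∨
      (∀ c, a < c → c < b → π a - e < π c ∧ π c < π a) := by
  have hfree' : ∀ d, a < d → d < b → π d ≠ π a := fun d h1 h2 hd => hfree d h1 h2 (hd ▸ ha)
  rcases H.step a (by omega) with hup | hdn
  · refine Or.inl fun c h1 h2 => ⟨?_, ?_⟩
    · by_contra! hle
      obtain ⟨d, h3, h4, h5⟩ :=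
        H.exists_eq (v := π a) (show a + 1 ≤ c by omega) (by omega) (Or.inr ⟨hle, by omega⟩)
      exact hfree' d (by omega) (by omega) h5
    · by_contra! hle
      obtain ⟨d, h3, h4, h5⟩ :=
        H.exists_eq (v := π a + e) (show a + 1 ≤ c by omega) (by omega) (Or.inl ⟨by omega, hle⟩)
      exact hfree d (by omega) (by omega) (h5 ▸ ha.add_self he.le)
  · refine Or.inr fun c h1 h2 => ⟨?_, ?_⟩
    · by_contra! hle
      obtain ⟨d, h3, h4, h5⟩ :=
        H.exists_eq (v := π a - e) (show a + 1 ≤ c by omega) (by omega) (Or.inr ⟨hle, by omega⟩)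
      rcases ha.sub_self with h6 | h6
      · have := H.nonneg d; omega
      · exact hfree d (by omega) (by omega) (h5 ▸ h6)
    · by_contra! hle
      obtain ⟨d, h3, h4, h5⟩ :=
        H.exists_eq (v := π a) (show a + 1 ≤ c by omega) (by omega) (Or.inl ⟨by omega, hle⟩)
      exact hfree' d (by omega) (by omega) h5

lemma isArc_of_wallFree (H : IsPath n π) (he : 0 < e) (hab : a < b) (hbn : b ≤ n)
    (ha : isWall e (π a)) (hfree : WallFree e π a b) (heq : π b = π a) : IsArc e π n a b := by
  rcases H.band_of_wallFree he hab hbn ha hfree with h | h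
  · exact Or.inl ⟨Nat.zero_le a, hab, hbn, ha, heq, h⟩
  · exact Or.inr ⟨Nat.zero_le a, hab, hbn, ha, heq, h⟩

lemma add_two_le (H : IsPath n π) (he : 2 ≤ e) (hab : a < b) (hbn : b ≤ n)
    (ha : isWall e (π a)) (hb : isWall e (π b)) : a + 2 ≤ b := by
  by_contra! h
  obtain rfl : b = a + 1 := by omega
  have := H.step a (by omega)
  exact not_isWall_of_near ha (by omega) (by omega) (by omega) hb

lemma isArc_of_isArc_reflectArcs (H : IsPath n π) (he : 0 < e) {r s : ℕ}
    (h : IsArc e (reflectArcs e n π) n r s) : IsArc e π n r s := by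
  have hr := (isWall_reflectArcs_iff dvd_rfl r).1 h.isWall_left
  have hs := (isWall_reflectArcs_iff dvd_rfl s).1 h.isWall_right
  refine H.isArc_of_wallFree he h.lt h.le hr
    (fun c h1 h2 hc => h.wallFree c h1 h2 ((isWall_reflectArcs_iff dvd_rfl c).2 hc)) ?_
  rw [← reflectArcs_of_isWall (n := n) hr, ← reflectArcs_of_isWall (n := n) hs, h.eq]

lemma reflectArcs_reflectArcs (H : IsPath n π) (he : 0 < e) :
    reflectArcs e n (reflectArcs e n π) = π := by
  funext b
  by_cases hb : InArc e n (reflectArcs e n π) b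
  · obtain ⟨r, s, h', h1, h2⟩ := hb
    have h := H.isArc_of_isArc_reflectArcs he h'
    rw [h'.reflectArcs_eq h1.le h2.le, reflectArcs_of_isWall h.isWall_left,
      h.reflectArcs_eq h1.le h2.le]
    ring
  · have hb' : ¬ InArc e n π b := fun ⟨r, s, h, h1, h2⟩ => hb ⟨r, s, isArc_reflectArcs h, h1, h2⟩
    rw [reflectArcs_of_not_inArc hb, reflectArcs_of_not_inArc hb']

end IsPath

end Arcs

section Degree

variable {e : ℤ} {n : ℕ} {π σ : ℕ → ℤ} {a b r s : ℕ}

lemma degStep_of_le {u v : ℤ} (h : u ≤ v) : degStep e u v = 0 := by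
  simp [degStep, not_lt.2 h]

lemma degStep_of_not_isWall {u v : ℤ} (hu : ¬ isWall e u) (hv : ¬ isWall e v) :
    degStep e u v = 0 := by
  simp [degStep, hu, hv]

lemma degStep_of_isWall_left {u v : ℤ} (hu : isWall e u) (h : v < u) : degStep e u v = 1 := by
  simp [degStep, hu, h]

lemma degStep_of_isWall_right {u v : ℤ} (hu : ¬ isWall e u) (hv : isWall e v) (h : v < u) :
    degStep e u v = -1 := by
  simp [degStep, hu, hv, h]

lemma pathDeg_add {c : ℕ} (hab : a ≤ b) (hbc : b ≤ c) :
    pathDeg e π a b + pathDeg e π b c = pathDeg e π a c :=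
  Finset.sum_Ico_consecutive _ hab hbc

lemma pathDeg_succ (a : ℕ) : pathDeg e π a (a + 1) = degStep e (π a) (π (a + 1)) := by
  simp [pathDeg]

lemma pathDeg_eq_zero (h : ∀ c, a ≤ c → c < b → degStep e (π c) (π (c + 1)) = 0) :
    pathDeg e π a b = 0 :=
  Finset.sum_eq_zero fun c hc => h c (Finset.mem_Ico.1 hc).1 (Finset.mem_Ico.1 hc).2

lemma pathDeg_congr (h : ∀ c, a ≤ c → c ≤ b → π c = σ c) : pathDeg e π a b = pathDeg e σ a b :=
  Finset.sum_congr rfl fun c hc => by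
    rw [Finset.mem_Ico] at hc
    rw [h c hc.1 hc.2.le, h (c + 1) (by omega) hc.2]

lemma pathDeg_of_wallFree (hab : a + 2 ≤ b) (hfree : WallFree e π a b) :
    pathDeg e π a b = degStep e (π a) (π (a + 1)) + degStep e (π (b - 1)) (π b) := by
  obtain ⟨m, rfl⟩ : ∃ m, b = m + 1 := ⟨b - 1, by omega⟩
  rw [← pathDeg_add (by omega : a ≤ a + 1) (by omega : a + 1 ≤ m + 1),
    ← pathDeg_add (by omega : a + 1 ≤ m) (by omega : m ≤ m + 1), pathDeg_succ, pathDeg_succ,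
    pathDeg_eq_zero fun c h1 h2 => degStep_of_not_isWall (hfree c (by omega) (by omega))
      (hfree (c + 1) (by omega) (by omega)), Nat.add_sub_cancel, zero_add]

lemma pathDeg_reflectArcs_eq_of_not_inArc (h : ∀ c, a ≤ c → c ≤ b → ¬ InArc e n π c) :
    pathDeg e (reflectArcs e n π) a b = pathDeg e π a b :=
  pathDeg_congr fun c h1 h2 => reflectArcs_of_not_inArc (h c h1 h2)

lemma not_inArc_of_forall_lt {c : ℕ} (h : ∀ d < c, ¬ isWall e (π d)) : ¬ InArc e n π c :=
  fun ⟨r, _, ha, h1, _⟩ => h r h1 ha.isWall_left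

lemma not_inArc_of_forall_gt {c : ℕ} (h : ∀ d, c < d → d ≤ n → ¬ isWall e (π d)) :
    ¬ InArc e n π c :=
  fun ⟨_, s, ha, _, h2⟩ => h s h2 ha.le ha.isWall_right

lemma not_inArc_of_wallFree_of_ne (ha : isWall e (π a)) (hb : isWall e (π b))
    (hfree : WallFree e π a b) (hne : π b ≠ π a) {c : ℕ} (h1 : a ≤ c) (h2 : c ≤ b) :
    ¬ InArc e n π c := by
  rintro ⟨r, s, h, hr, hs⟩
  rcases h1.eq_or_lt with rfl | h1
  · exact not_inArc_of_isWall ha ⟨r, s, h, hr, hs⟩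
  rcases h2.eq_or_lt with rfl | h2
  · exact not_inArc_of_isWall hb ⟨r, s, h, hr, hs⟩
  obtain ⟨rfl, rfl⟩ := eq_of_wallFree_of_overlap ha hb h.isWall_left h.isWall_right hfree
    h.wallFree h1 h2 hr hs
  exact hne h.eq

namespace IsPath

lemma pathDeg_isArc (H : IsPath n π) (he : 2 ≤ e) (h : IsArc e π n r s) :
    pathDeg e π r s = if π (r + 1) < π r then 1 else -1 := by
  have hrs := H.add_two_le he h.lt h.le h.isWall_left h.isWall_right
  have hs := h.isWall_right
  have hnw := h.wallFree (s - 1) (by omega) (by omega)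
  rw [pathDeg_of_wallFree hrs h.wallFree]
  have heq := h.eq
  rcases h with h | h
  · have h1 := h.2.2.2.2.2 (r + 1) (by omega) (by omega)
    have h2 := h.2.2.2.2.2 (s - 1) (by omega) (by omega)
    rw [if_neg (by omega), degStep_of_le (by omega), degStep_of_isWall_right hnw hs (by omega)]
    ring
  · have h1 := h.2.2.2.2.2 (r + 1) (by omega) (by omega)
    have h2 := h.2.2.2.2.2 (s - 1) (by omega) (by omega)
    rw [if_pos (by omega), degStep_of_isWall_left h.2.2.2.1 (by omega), degStep_of_le (by omega)]
    ring

lemma pathDeg_reflectArcs_isArc (H : IsPath n π) (he : 2 ≤ e) (h : IsArc e π n r s) :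
    pathDeg e (reflectArcs e n π) r s = -pathDeg e π r s := by
  have := H.step r (by have := h.lt; have := h.le; omega)
  have := h.lt
  rw [(isPath_reflectArcs H).pathDeg_isArc he (isArc_reflectArcs h), H.pathDeg_isArc he h,
    h.reflectArcs_eq le_rfl h.lt.le, h.reflectArcs_eq (b := r + 1) (by omega) (by omega)]
  split_ifs <;> omega

lemma pathDeg_crossing (H : IsPath n π) (he : 2 ≤ e) (hab : a < b) (hbn : b ≤ n)
    (ha : isWall e (π a)) (hb : isWall e (π b)) (hfree : WallFree e π a b) (hne : π b ≠ π a) :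
    pathDeg e π a b = 0 := by
  have hab2 := H.add_two_le he hab hbn ha hb
  have hlast := H.step (b - 1) (by omega)
  rw [Nat.sub_add_cancel (by omega)] at hlast
  have hnw := hfree (b - 1) (by omega) (by omega)
  rw [pathDeg_of_wallFree hab2 hfree]
  rcases H.band_of_wallFree (by omega) hab hbn ha hfree with h | h
  · have h1 := h (a + 1) (by omega) (by omega)
    have h2 := h (b - 1) (by omega) (by omega)
    have hup : π b = π (b - 1) + 1 := by
      rcases hlast with h3 | h3
      · exact h3
      · exact absurd hb (not_isWall_of_near ha (by omega) (by omega) hne)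
    rw [degStep_of_le (by omega), degStep_of_le (by omega)]
    ring
  · have h1 := h (a + 1) (by omega) (by omega)
    have h2 := h (b - 1) (by omega) (by omega)
    have hdown : π b = π (b - 1) - 1 := by
      rcases hlast with h3 | h3
      · exact absurd hb (not_isWall_of_near ha (by omega) (by omega) hne)
      · exact h3
    rw [degStep_of_isWall_left ha (by omega), degStep_of_isWall_right hnw hb (by omega)]
    ring

lemma pathDeg_eq_zero_before_first_wall (H : IsPath n π) (hbn : b ≤ n)
    (hfree : ∀ c < b, ¬ isWall e (π c)) : pathDeg e π 0 b = 0 := by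
  refine pathDeg_eq_zero fun c _ hc => ?_
  by_cases hw : isWall e (π (c + 1))
  · refine degStep_of_le (not_lt.1 fun hlt => ?_)
    obtain ⟨d, -, hd, hdv⟩ := H.exists_eq (Nat.zero_le c) (by omega)
      (Or.inl ⟨H.start ▸ H.nonneg (c + 1), hlt.le⟩)
    exact hfree d (by omega) (hdv ▸ hw)
  · exact degStep_of_not_isWall (hfree c hc) hw

lemma pathDeg_reflectArcs_head (H : IsPath n π) (hbn : b ≤ n)
    (hfree : ∀ c < b, ¬ isWall e (π c)) :
    pathDeg e (reflectArcs e n π) 0 b = -pathDeg e π 0 b := by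
  rw [pathDeg_reflectArcs_eq_of_not_inArc fun c _ hc =>
      not_inArc_of_forall_lt fun d hd => hfree d (by omega),
    H.pathDeg_eq_zero_before_first_wall hbn hfree, neg_zero]

lemma pathDeg_reflectArcs_wallFree (H : IsPath n π) (he : 2 ≤ e) (hab : a < b) (hbn : b ≤ n)
    (ha : isWall e (π a)) (hb : isWall e (π b)) (hfree : WallFree e π a b) :
    pathDeg e (reflectArcs e n π) a b = -pathDeg e π a b := by
  by_cases heq : π b = π a
  · exact H.pathDeg_reflectArcs_isArc he (H.isArc_of_wallFree (by omega) hab hbn ha hfree heq)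
  · rw [pathDeg_reflectArcs_eq_of_not_inArc fun c h1 h2 =>
        not_inArc_of_wallFree_of_ne ha hb hfree heq h1 h2,
      H.pathDeg_crossing he hab hbn ha hb hfree heq, neg_zero]

end IsPath

namespace IsRegularPath

lemma pathDeg_eq_zero_after_last_wall (H : IsRegularPath e n π) (han : a ≤ n)
    (ha : isWall e (π a)) (hfree : ∀ c, a < c → c ≤ n → ¬ isWall e (π c)) :
    pathDeg e π a n = 0 := by
  rcases han.eq_or_lt with rfl | han'
  · exact pathDeg_eq_zero fun c h1 h2 => by omega
  refine pathDeg_eq_zero fun c h1 h2 => ?_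
  rcases h1.eq_or_lt with hca | h1
  · rw [← hca]
    refine degStep_of_le ?_
    rcases H.step a han' with h | h
    · omega
    · obtain ⟨d, hd1, hd2, hdv⟩ := H.exists_eq (v := π a) (show a + 1 ≤ n by omega) le_rfl
        (Or.inl ⟨by omega, H.endsAbove a han ha hfree⟩)
      exact (hfree d (by omega) hd2 (hdv ▸ ha)).elim
  · exact degStep_of_not_isWall (hfree c h1 h2.le) (hfree (c + 1) (by omega) h2)

lemma pathDeg_reflectArcs_tail (H : IsRegularPath e n π) (han : a ≤ n) (ha : isWall e (π a))
    (hfree : ∀ c, a < c → c ≤ n → ¬ isWall e (π c)) :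
    pathDeg e (reflectArcs e n π) a n = -pathDeg e π a n := by
  rw [pathDeg_reflectArcs_eq_of_not_inArc fun c h1 _ =>
      not_inArc_of_forall_gt fun d hd hdn => hfree d (by omega) hdn,
    H.pathDeg_eq_zero_after_last_wall han ha hfree, neg_zero]

lemma pathDeg_reflectArcs_of_isWall (H : IsRegularPath e n π) (he : 2 ≤ e) {a : ℕ}
    (han : a ≤ n) (ha : isWall e (π a)) :
    pathDeg e (reflectArcs e n π) a n = -pathDeg e π a n := by
  by_cases hex : ∃ b, a < b ∧ b ≤ n ∧ isWall e (π b)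
  · obtain ⟨hab, hbn, hb⟩ := Nat.find_spec hex
    have hfree : WallFree e π a (Nat.find hex) :=
      fun c h1 h2 hc => Nat.find_min hex h2 ⟨h1, by omega, hc⟩
    rw [← pathDeg_add hab.le hbn, ← pathDeg_add hab.le hbn,
      H.pathDeg_reflectArcs_wallFree he hab hbn ha hb hfree,
      H.pathDeg_reflectArcs_of_isWall he hbn hb, neg_add]
  · simp only [not_exists, not_and] at hex
    exact H.pathDeg_reflectArcs_tail han ha hex
termination_by n - a
decreasing_by omega

lemma pathDeg_reflectArcs (H : IsRegularPath e n π) (he : 2 ≤ e) :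
    pathDeg e (reflectArcs e n π) 0 n = -pathDeg e π 0 n := by
  by_cases hex : ∃ b, b ≤ n ∧ isWall e (π b)
  · obtain ⟨hbn, hb⟩ := Nat.find_spec hex
    have hfree : ∀ c < Nat.find hex, ¬ isWall e (π c) :=
      fun c hc hw => Nat.find_min hex hc ⟨by omega, hw⟩
    rw [← pathDeg_add (Nat.zero_le _) hbn, ← pathDeg_add (Nat.zero_le _) hbn,
      H.pathDeg_reflectArcs_head hbn hfree, H.pathDeg_reflectArcs_of_isWall he hbn hb, neg_add]
  · simp only [not_exists, not_and] at hex
    exact H.pathDeg_reflectArcs_head le_rfl fun c hc => hex c hc.le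

end IsRegularPath

end Degree

def inCol (n : ℕ) (t : Fin n → ℕ × ℕ) (j c : ℕ) : Prop :=
  ∃ h : c < n, (t ⟨c, h⟩).2 = j

def IsUpStep (π : ℕ → ℤ) (c : ℕ) : Prop := π (c + 1) = π c + 1

def IsDownStep (π : ℕ → ℤ) (c : ℕ) : Prop := π (c + 1) = π c - 1

lemma not_isUpStep_and_isDownStep {π : ℕ → ℤ} {c : ℕ} : ¬ (IsUpStep π c ∧ IsDownStep π c) := by
  unfold IsUpStep IsDownStep
  omega

/-- The inverse of `pth` on two-column standard tableaux. -/
def tabOfPath (n : ℕ) (π : ℕ → ℤ) (r : Fin n) : ℕ × ℕ :=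
  if IsUpStep π r then (Nat.count (IsUpStep π) r, 0) else (Nat.count (IsDownStep π) r, 1)

lemma Nat.exists_count_eq_of_lt_count {p : ℕ → Prop} [DecidablePred p] {a b : ℕ}
    (h : a < Nat.count p b) : ∃ c < b, p c ∧ Nat.count p c = a := by
  have hn : ∀ hf : (Set.ofPred p).Finite, a < hf.toFinset.card :=
    fun hf => h.trans_le (Nat.count_le_card hf b)
  exact ⟨Nat.nth p a, Nat.nth_lt_of_lt_count h, Nat.nth_mem a hn, Nat.count_nth hn⟩

lemma Nat.le_of_count_le_count {p : ℕ → Prop} [DecidablePred p] {a b : ℕ} (hb : p b)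
    (h : Nat.count p a ≤ Nat.count p b) : a ≤ b :=
  not_lt.1 fun hlt => (Nat.count_strict_mono hb hlt).not_ge h

section Tableaux

variable {n : ℕ} {t : Fin n → ℕ × ℕ} {π : ℕ → ℤ}

lemma inCol_val_iff (r : Fin n) {j : ℕ} : inCol n t j r ↔ (t r).2 = j :=
  ⟨fun ⟨_, h⟩ => h, fun h => ⟨r.isLt, h⟩⟩

lemma cntCol_eq_count (t : Fin n → ℕ × ℕ) (a j : ℕ) :
    cntCol n t a j = Nat.count (inCol n t j) a := by
  rw [cntCol, Nat.count_eq_card_filter_range]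
  refine Finset.card_bij (fun r _ => (r : ℕ)) (fun r hr => ?_) (fun r _ s _ h => Fin.ext h)
    (fun c hc => ?_)
  · simp only [Finset.mem_filter, Finset.mem_univ, true_and] at hr
    simp only [Finset.mem_filter, Finset.mem_range]
    exact ⟨hr.1, (inCol_val_iff r).2 hr.2⟩
  · simp only [Finset.mem_filter, Finset.mem_range] at hc
    obtain ⟨hca, hcn, hcj⟩ := hc
    exact ⟨⟨c, hcn⟩, by simp [hca, hcj], rfl⟩

lemma pth_eq_count (t : Fin n → ℕ × ℕ) (a : ℕ) :
    pth n t a = Nat.count (inCol n t 0) a - Nat.count (inCol n t 1) a := by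
  rw [pth, cntCol_eq_count, cntCol_eq_count]

lemma pth_succ (t : Fin n → ℕ × ℕ) (c : ℕ) :
    pth n t (c + 1) =
      pth n t c + (if inCol n t 0 c then 1 else 0) - (if inCol n t 1 c then 1 else 0) := by
  rw [pth_eq_count, pth_eq_count, Nat.count_succ, Nat.count_succ]
  push_cast
  ring

lemma not_inCol_zero_and_one {c : ℕ} : ¬ (inCol n t 0 c ∧ inCol n t 1 c) :=
  fun ⟨⟨_, h0⟩, ⟨_, h1⟩⟩ => zero_ne_one (h0.symm.trans h1)

lemma isUpStep_pth (t : Fin n → ℕ × ℕ) : IsUpStep (pth n t) = inCol n t 0 := by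
  funext c
  apply propext
  have hs := pth_succ t c
  unfold IsUpStep
  by_cases h0 : inCol n t 0 c
  · have h1 : ¬ inCol n t 1 c := fun h1 => not_inCol_zero_and_one ⟨h0, h1⟩
    rw [if_pos h0, if_neg h1] at hs
    exact iff_of_true (by omega) h0
  · rw [if_neg h0] at hs
    refine iff_of_false (fun h => ?_) h0
    split_ifs at hs <;> omega

lemma isDownStep_pth (t : Fin n → ℕ × ℕ) : IsDownStep (pth n t) = inCol n t 1 := by
  funext c
  apply propext
  have hs := pth_succ t c
  unfold IsDownStep
  by_cases h1 : inCol n t 1 c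
  · have h0 : ¬ inCol n t 0 c := fun h0 => not_inCol_zero_and_one ⟨h0, h1⟩
    rw [if_pos h1, if_neg h0] at hs
    exact iff_of_true (by omega) h1
  · rw [if_neg h1] at hs
    refine iff_of_false (fun h => ?_) h1
    split_ifs at hs <;> omega

lemma IsStdTab.fst_eq_count (hstd : IsStdTab n t) (r : Fin n) :
    (t r).1 = Nat.count (inCol n t (t r).2) r := by
  obtain ⟨hinj, hdown, hmono⟩ := hstd
  rw [← cntCol_eq_count, cntCol, ← Finset.card_range (t r).1]
  symm
  refine Finset.card_bij (fun r' _ => (t r').1) (fun r' hr' => ?_)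
    (fun r₁ h₁ r₂ h₂ h => ?_) (fun k hk => ?_)
  · simp only [Finset.mem_filter, Finset.mem_univ, true_and] at hr'
    rw [Finset.mem_range]
    by_contra! hle
    exact absurd (hmono r r' hle hr'.2.symm.le) (not_le.2 hr'.1)
  · simp only [Finset.mem_filter, Finset.mem_univ, true_and] at h₁ h₂
    exact hinj (Prod.ext h (h₁.2.trans h₂.2.symm))
  · rw [Finset.mem_range] at hk
    obtain ⟨r', hr'⟩ := hdown r k (t r).2 hk.le le_rfl
    have hle : r' ≤ r := hmono r' r (by rw [hr']; exact hk.le) (by rw [hr'])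
    have hne : r' ≠ r := by rintro rfl; rw [hr'] at hk; exact lt_irrefl _ hk
    have hlt : r' < r := lt_of_le_of_ne hle hne
    refine ⟨r', ?_, by rw [hr']⟩
    simp only [Finset.mem_filter, Finset.mem_univ, true_and]
    exact ⟨hlt, by rw [hr']⟩

lemma IsStdTab.count_inCol_one_le (hstd : IsStdTab n t) (b : ℕ) :
    Nat.count (inCol n t 1) b ≤ Nat.count (inCol n t 0) b := by
  induction b with
  | zero => simp
  | succ b ih =>
    rw [Nat.count_succ, Nat.count_succ]
    by_cases h1 : inCol n t 1 b
    -- the entry left of a column-`1` entry comes earlier, so column `0` stays at least as long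
    · obtain ⟨hb, hcol⟩ := h1
      set r : Fin n := ⟨b, hb⟩
      have hrow : (t r).1 = Nat.count (inCol n t 1) b := by rw [hstd.fst_eq_count r, hcol]
      obtain ⟨r', hr'⟩ := hstd.2.1 r (t r).1 0 le_rfl (Nat.zero_le _)
      have hle : r' ≤ r := hstd.2.2 r' r (by rw [hr']) (by rw [hr']; exact Nat.zero_le _)
      have hne : r' ≠ r := by
        rintro rfl
        have := congrArg Prod.snd hr'
        simp only at this
        omega
      have hlt : r' < r := lt_of_le_of_ne hle hne
      have hrow' : (t r).1 = Nat.count (inCol n t 0) r' := by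
        have := hstd.fst_eq_count r'
        rw [hr'] at this
        exact this
      have hmono := Nat.count_monotone (inCol n t 0) (Nat.succ_le_of_lt hlt)
      rw [Nat.count_succ, if_pos ((inCol_val_iff r').2 (by rw [hr']))] at hmono
      rw [if_pos ⟨hb, hcol⟩]
      split_ifs <;> simp only [r] at hmono <;> omega
    · rw [if_neg h1]
      split_ifs <;> omega

lemma isPath_pth (hstd : IsStdTab n t) (hcol : ∀ r, (t r).2 < 2) : IsPath n (pth n t) where
  start := by simp [pth_eq_count]
  step c hc := by
    rcases (by have := hcol ⟨c, hc⟩; omega : (t ⟨c, hc⟩).2 = 0 ∨ (t ⟨c, hc⟩).2 = 1) with h | h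
    · exact Or.inl ((congrFun (isUpStep_pth t) c).mpr ⟨hc, h⟩)
    · exact Or.inr ((congrFun (isDownStep_pth t) c).mpr ⟨hc, h⟩)
  flat c hc := by
    rw [pth_succ, if_neg fun ⟨h, _⟩ => by omega, if_neg fun ⟨h, _⟩ => by omega]
    ring
  nonneg c := by
    rw [pth_eq_count, sub_nonneg, Nat.cast_le]
    exact hstd.count_inCol_one_le c

lemma tabOfPath_pth (hstd : IsStdTab n t) (hcol : ∀ r, (t r).2 < 2) :
    tabOfPath n (pth n t) = t := by
  funext r
  rw [tabOfPath, isUpStep_pth, isDownStep_pth, inCol_val_iff]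
  have hrow := hstd.fst_eq_count r
  split_ifs with h
  · rw [← h, ← hrow]
  · obtain h' : (t r).2 = 1 := by have := hcol r; omega
    rw [← h', ← hrow]

lemma count_inCol_le (hinj : Function.Injective t) {j m : ℕ}
    (h : ∀ r, (t r).2 = j → (t r).1 < m) : Nat.count (inCol n t j) n ≤ m := by
  rw [← cntCol_eq_count, cntCol]
  calc _ ≤ (Finset.range m).card :=
        Finset.card_le_card_of_injOn (fun r => (t r).1) (fun r hr => ?_)
          (fun r₁ h₁ r₂ h₂ heq => ?_)
    _ = m := Finset.card_range m
  · simp only [Finset.coe_filter, Finset.mem_univ, true_and, Set.mem_ofPred_eq] at hr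
    simpa using h r hr.2
  · simp only [Finset.coe_filter, Finset.mem_univ, true_and, Set.mem_ofPred_eq] at h₁ h₂
    exact hinj (Prod.ext heq (h₁.2.trans h₂.2.symm))

end Tableaux

namespace IsPath

variable {n : ℕ} {π : ℕ → ℤ}

lemma count_up_sub_count_down (H : IsPath n π) (b : ℕ) :
    (Nat.count (IsUpStep π) b : ℤ) - Nat.count (IsDownStep π) b = π b := by
  induction b with
  | zero => simp [H.start]
  | succ b ih =>
    have hs : (π (b + 1) = π b + 1 ∨ π (b + 1) = π b - 1) ∨ π (b + 1) = π b := by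
      rcases lt_or_ge b n with hb | hb
      · exact Or.inl (H.step b hb)
      · exact Or.inr (H.flat b hb)
    rw [Nat.count_succ, Nat.count_succ]
    unfold IsUpStep IsDownStep at *
    split_ifs <;> push_cast <;> omega

lemma count_up_add_count_down (H : IsPath n π) {b : ℕ} (hb : b ≤ n) :
    Nat.count (IsUpStep π) b + Nat.count (IsDownStep π) b = b := by
  induction b with
  | zero => simp
  | succ b ih =>
    have hs := H.step b hb
    rw [Nat.count_succ, Nat.count_succ]
    have := ih (by omega)
    unfold IsUpStep IsDownStep at *
    split_ifs <;> omega

lemma isDownStep_of_not_isUpStep (H : IsPath n π) {c : ℕ} (hc : c < n) (h : ¬ IsUpStep π c) :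
    IsDownStep π c :=
  (H.step c hc).resolve_left h

lemma lt_of_isUpStep (H : IsPath n π) {c : ℕ} (h : IsUpStep π c) : c < n := by
  by_contra! hc
  have := H.flat c hc
  unfold IsUpStep at h
  omega

lemma lt_of_isDownStep (H : IsPath n π) {c : ℕ} (h : IsDownStep π c) : c < n := by
  by_contra! hc
  have := H.flat c hc
  unfold IsDownStep at h
  omega

lemma count_down_lt_count_up (H : IsPath n π) {c : ℕ} (h : IsDownStep π c) :
    Nat.count (IsDownStep π) c < Nat.count (IsUpStep π) c := by
  have h1 := H.count_up_sub_count_down (c + 1)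
  have h2 := H.nonneg (c + 1)
  rw [Nat.count_succ, Nat.count_succ, if_pos h,
    if_neg fun hu => not_isUpStep_and_isDownStep ⟨hu, h⟩] at h1
  push_cast at h1
  omega

lemma tabOfPath_of_isUpStep {r : Fin n} (h : IsUpStep π r) :
    tabOfPath n π r = (Nat.count (IsUpStep π) r, 0) :=
  if_pos h

lemma tabOfPath_of_isDownStep {r : Fin n} (h : IsDownStep π r) :
    tabOfPath n π r = (Nat.count (IsDownStep π) r, 1) :=
  if_neg fun hu => not_isUpStep_and_isDownStep ⟨hu, h⟩

lemma inCol_tabOfPath_zero (H : IsPath n π) : inCol n (tabOfPath n π) 0 = IsUpStep π := by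
  funext c
  apply propext
  constructor
  · rintro ⟨hc, h⟩
    by_contra hu
    simp [tabOfPath, hu] at h
  · intro hu
    exact ⟨H.lt_of_isUpStep hu, by simp [tabOfPath, hu]⟩

lemma inCol_tabOfPath_one (H : IsPath n π) : inCol n (tabOfPath n π) 1 = IsDownStep π := by
  funext c
  apply propext
  constructor
  · rintro ⟨hc, h⟩
    by_cases hu : IsUpStep π c
    · simp [tabOfPath, hu] at h
    · exact H.isDownStep_of_not_isUpStep hc hu
  · intro hd
    have hc := H.lt_of_isDownStep hd
    exact ⟨hc, by rw [tabOfPath_of_isDownStep (r := ⟨c, hc⟩) hd]⟩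

lemma pth_tabOfPath (H : IsPath n π) : pth n (tabOfPath n π) = π := by
  funext b
  rw [pth_eq_count, H.inCol_tabOfPath_zero, H.inCol_tabOfPath_one, H.count_up_sub_count_down]

lemma isUpStep_or_isDownStep (H : IsPath n π) (r : Fin n) : IsUpStep π r ∨ IsDownStep π r :=
  H.step r r.isLt

lemma injective_tabOfPath (H : IsPath n π) : Function.Injective (tabOfPath n π) := by
  intro r s h
  rcases H.isUpStep_or_isDownStep r with hr | hr <;>
    rcases H.isUpStep_or_isDownStep s with hs | hs <;>
    simp only [tabOfPath_of_isUpStep, tabOfPath_of_isDownStep, hr, hs, Prod.mk.injEq,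
      zero_ne_one, one_ne_zero, and_true, and_false] at h
  all_goals exact Fin.ext (Nat.count_injective hr hs h)

lemma exists_tabOfPath_eq (H : IsPath n π) {r : Fin n} {a b : ℕ} (ha : a ≤ (tabOfPath n π r).1)
    (hb : b ≤ (tabOfPath n π r).2) : ∃ r', tabOfPath n π r' = (a, b) := by
  have hup : a < Nat.count (IsUpStep π) (r + 1) → ∃ r', tabOfPath n π r' = (a, 0) := by
    intro ha'
    obtain ⟨c, hc, hcu, hca⟩ := Nat.exists_count_eq_of_lt_count ha'
    exact ⟨⟨c, by omega⟩, by rw [tabOfPath_of_isUpStep hcu, hca]⟩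
  have hmono := Nat.count_monotone (IsUpStep π) (show (r : ℕ) ≤ r + 1 by omega)
  rcases H.isUpStep_or_isDownStep r with hr | hr
  · rw [tabOfPath_of_isUpStep hr] at ha hb
    obtain rfl : b = 0 := by simpa using hb
    exact hup (by rw [Nat.count_succ, if_pos hr]; simp at ha; omega)
  · rw [tabOfPath_of_isDownStep hr] at ha hb
    simp only at ha hb
    have hlt := H.count_down_lt_count_up hr
    rcases Nat.le_one_iff_eq_zero_or_eq_one.1 hb with rfl | rfl
    · exact hup (by omega)
    · have ha' : a < Nat.count (IsDownStep π) (r + 1) := by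
        rw [Nat.count_succ, if_pos hr]
        omega
      obtain ⟨c, hc, hcd, hca⟩ := Nat.exists_count_eq_of_lt_count ha'
      exact ⟨⟨c, by omega⟩, by rw [tabOfPath_of_isDownStep hcd, hca]⟩

lemma le_of_tabOfPath_le (H : IsPath n π) {r s : Fin n}
    (h1 : (tabOfPath n π r).1 ≤ (tabOfPath n π s).1)
    (h2 : (tabOfPath n π r).2 ≤ (tabOfPath n π s).2) : r ≤ s := by
  rw [Fin.le_def]
  rcases H.isUpStep_or_isDownStep r with hr | hr <;>
    rcases H.isUpStep_or_isDownStep s with hs | hs <;>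
    simp only [tabOfPath_of_isUpStep, tabOfPath_of_isDownStep, hr, hs] at h1 h2
  · exact Nat.le_of_count_le_count hs h1
  · exact (Nat.lt_of_count_lt_count (h1.trans_lt (H.count_down_lt_count_up hs))).le
  · omega
  · exact Nat.le_of_count_le_count hs h1

lemma isStdTab_tabOfPath (H : IsPath n π) : IsStdTab n (tabOfPath n π) :=
  ⟨H.injective_tabOfPath, fun _ _ _ ha hb => H.exists_tabOfPath_eq ha hb,
    fun _ _ h1 h2 => H.le_of_tabOfPath_le h1 h2⟩

lemma memShape2_tabOfPath (H : IsPath n π) {x y : ℕ} (hu : Nat.count (IsUpStep π) n ≤ x + y)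
    (hd : Nat.count (IsDownStep π) n ≤ x) (r : Fin n) : memShape2 x y (tabOfPath n π r) := by
  rcases H.isUpStep_or_isDownStep r with hr | hr
  · have := Nat.count_strict_mono hr r.isLt
    rw [tabOfPath_of_isUpStep hr, memShape2]
    omega
  · have := Nat.count_strict_mono hr r.isLt
    rw [tabOfPath_of_isDownStep hr, memShape2]
    omega

lemma count_reflectArcs {e : ℤ} (H : IsPath n π) :
    Nat.count (IsUpStep (reflectArcs e n π)) n = Nat.count (IsUpStep π) n ∧
      Nat.count (IsDownStep (reflectArcs e n π)) n = Nat.count (IsDownStep π) n := by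
  have H' := isPath_reflectArcs (e := e) H
  have hend : reflectArcs e n π n = π n := reflectArcs_of_not_inArc (not_inArc_of_le le_rfl)
  have := H.count_up_add_count_down le_rfl
  have := H.count_up_sub_count_down n
  have := H'.count_up_add_count_down le_rfl
  have := H'.count_up_sub_count_down n
  omega

end IsPath

def stepResidue (π : ℕ → ℤ) (c : ℕ) : ℤ :=
  if IsUpStep π c then -(Nat.count (IsUpStep π) c : ℤ) else 1 - Nat.count (IsDownStep π) c

lemma resNode_tabOfPath (e n : ℕ) (π : ℕ → ℤ) (r : Fin n) :
    resNode e (tabOfPath n π r) = (stepResidue π r : ZMod e) := by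
  unfold tabOfPath stepResidue resNode
  split_ifs <;> push_cast <;> ring

lemma IsPath.dvd_stepResidue_sub_stepResidue_reflectArcs {e : ℤ} {n : ℕ} {π : ℕ → ℤ}
    (H : IsPath n π) {c : ℕ} (hc : c < n) :
    e ∣ stepResidue π c - stepResidue (reflectArcs e n π) c := by
  have H' := isPath_reflectArcs (e := e) H
  have h1 := H.count_up_add_count_down hc.le
  have h2 := H.count_up_sub_count_down c
  have h1' := H'.count_up_add_count_down hc.le
  have h2' := H'.count_up_sub_count_down c
  have hs := H.step c hc
  unfold stepResidue
  by_cases harc : ∃ r s, IsArc e π n r s ∧ r ≤ c ∧ c < s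
  · obtain ⟨r, s, h, hr, hs'⟩ := harc
    have hc0 := h.reflectArcs_eq hr hs'.le
    have hc1 := h.reflectArcs_eq (b := c + 1) (by omega) hs'
    obtain ⟨k, hk⟩ := h.isWall_left.dvd
    split_ifs with hu hu' hu'
    all_goals simp only [IsUpStep, hc0, hc1] at hu hu' h2'
    all_goals first
      | omega
      | exact ⟨k, by rw [← hk]; omega⟩
      | exact ⟨-k, by rw [mul_neg, ← hk]; omega⟩
  · have hc0 : reflectArcs e n π c = π c := reflectArcs_of_not_inArc
      fun ⟨r, s, h, h1, h2⟩ => harc ⟨r, s, h, h1.le, h2⟩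
    have hc1 : reflectArcs e n π (c + 1) = π (c + 1) := reflectArcs_of_not_inArc
      fun ⟨r, s, h, h1, h2⟩ => harc ⟨r, s, h, by omega, by omega⟩
    split_ifs with hu hu' hu'
    all_goals simp only [IsUpStep, hc0, hc1] at hu hu' h2'
    all_goals exact ⟨0, by rw [mul_zero]; omega⟩

lemma regPath_eq_self_iff {f : ℤ} {n : ℕ} {π : ℕ → ℤ} :
    regPath f n π = π ↔ EndsAboveLastWall f n π := by
  have hmem : ∀ c, c ∈ wallTimes f n π ↔ c ≤ n ∧ isWall f (π c) := fun c => by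
    simp [wallTimes]
  unfold regPath
  by_cases hne : (wallTimes f n π).Nonempty
  swap
  · rw [dif_neg hne]
    exact iff_of_true rfl fun c hc hw _ => absurd ⟨c, (hmem c).2 ⟨hc, hw⟩⟩ hne
  rw [dif_pos hne]
  dsimp only
  split_ifs with hlt
  · obtain ⟨han, haw⟩ := (hmem _).1 ((wallTimes f n π).max'_mem hne)
    have hlast : ∀ d, (wallTimes f n π).max' hne < d → d ≤ n → ¬ isWall f (π d) :=
      fun d h1 h2 hd => absurd ((wallTimes f n π).le_max' d ((hmem d).2 ⟨h2, hd⟩)) (not_le.2 h1)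
    refine iff_of_false (fun h => ?_) (fun h => absurd (h _ han haw hlast) (not_le.2 hlt))
    have hna : ¬ n ≤ (wallTimes f n π).max' hne := fun hna => by
      rw [le_antisymm han hna] at hlt
      exact lt_irrefl _ hlt
    have := congrFun h n
    simp only [if_neg hna] at this
    omega
  · refine iff_of_true rfl fun c hc hw hlater => ?_
    obtain ⟨han, haw⟩ := (hmem _).1 ((wallTimes f n π).max'_mem hne)
    rcases ((wallTimes f n π).le_max' c ((hmem c).2 ⟨hc, hw⟩)).eq_or_lt with heq | hlt'
    · rw [heq]
      exact not_lt.1 hlt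
    · exact absurd haw (hlater _ hlt' han)

def reflectTab (e n : ℕ) (t : Fin n → ℕ × ℕ) : Fin n → ℕ × ℕ :=
  tabOfPath n (reflectArcs e n (pth n t))

section Reflection

variable {e p n x y : ℕ} {t : Fin n → ℕ × ℕ}

lemma InDStd.snd_lt_two (h : InDStd e p n x y t) (r : Fin n) : (t r).2 < 2 := by
  rcases h.2.1 r with ⟨-, h⟩ | ⟨-, -, h⟩ <;> omega

lemma InDStd.isRegularPath (h : InDStd e p n x y t) : IsRegularPath e n (pth n t) where
  toIsPath := isPath_pth h.1 h.snd_lt_two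
  endsAbove := regPath_eq_self_iff.1 (by simpa using h.2.2 0)

lemma pth_reflectTab (h : InDStd e p n x y t) :
    pth n (reflectTab e n t) = reflectArcs e n (pth n t) :=
  (isPath_reflectArcs h.isRegularPath.toIsPath).pth_tabOfPath

lemma inDStd_reflectTab (h : InDStd e p n x y t) : InDStd e p n x y (reflectTab e n t) := by
  have H := h.isRegularPath.toIsPath
  have H' := isPath_reflectArcs (e := (e : ℤ)) H
  obtain ⟨hu, hd⟩ := H.count_reflectArcs (e := e)
  rw [isUpStep_pth] at hu
  rw [isDownStep_pth] at hd
  refine ⟨H'.isStdTab_tabOfPath, H'.memShape2_tabOfPath ?_ ?_, fun z => ?_⟩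
  · rw [hu]
    exact count_inCol_le h.1.1 fun r hr => by rcases h.2.1 r with ⟨h1, -⟩ | ⟨-, h1, -⟩ <;> omega
  · rw [hd]
    exact count_inCol_le h.1.1 fun r hr => by rcases h.2.1 r with ⟨h1, -⟩ | ⟨-, -, h1⟩ <;> omega
  · rw [pth_reflectTab h]
    exact regPath_eq_self_iff.2
      (endsAboveLastWall_reflectArcs (dvd_mul_right _ _) (regPath_eq_self_iff.1 (h.2.2 z)))

lemma reflectTab_reflectTab (he : 2 ≤ e) (h : InDStd e p n x y t) :
    reflectTab e n (reflectTab e n t) = t := by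
  rw [reflectTab, pth_reflectTab h, h.isRegularPath.reflectArcs_reflectArcs (by omega),
    tabOfPath_pth h.1 h.snd_lt_two]

lemma resNode_reflectTab (h : InDStd e p n x y t) (r : Fin n) :
    resNode e (reflectTab e n t r) = resNode e (t r) := by
  conv_rhs => rw [← tabOfPath_pth h.1 h.snd_lt_two]
  rw [reflectTab, resNode_tabOfPath, resNode_tabOfPath, ZMod.intCast_eq_intCast_iff_dvd_sub]
  exact h.isRegularPath.dvd_stepResidue_sub_stepResidue_reflectArcs r.isLt

lemma pathDeg_reflectTab (he : 2 ≤ e) (h : InDStd e p n x y t) :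
    pathDeg e (pth n (reflectTab e n t)) 0 n = -pathDeg e (pth n t) 0 n := by
  rw [pth_reflectTab h]
  exact h.isRegularPath.pathDeg_reflectArcs (by omega)

end Reflection

theorem stmt15_general (e p : ℕ) (he : 2 ≤ e)
    (n x y : ℕ) :
    (∀ (iv : Fin n → ZMod e) (d : ℤ),
      Set.ncard {t : Fin n → ℕ × ℕ | InDStd e p n x y t ∧
          (∀ r, resNode e (t r) = iv r) ∧ pathDeg (e : ℤ) (pth n t) 0 n = d} =
      Set.ncard {t : Fin n → ℕ × ℕ | InDStd e p n x y t ∧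
          (∀ r, resNode e (t r) = iv r) ∧ pathDeg (e : ℤ) (pth n t) 0 n = -d}) ∧
    ∃ ι : (Fin n → ℕ × ℕ) → (Fin n → ℕ × ℕ),
      ∀ t, InDStd e p n x y t →
        InDStd e p n x y (ι t) ∧ ι (ι t) = t ∧
        (∀ r, resNode e ((ι t) r) = resNode e (t r)) ∧
        pathDeg (e : ℤ) (pth n (ι t)) 0 n = - pathDeg (e : ℤ) (pth n t) 0 n ∧
        (∀ r s : ℕ,
          (IsPosArc (e : ℤ) (pth n t) 0 n r s ∨ IsNegArc (e : ℤ) (pth n t) 0 n r s) →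
          ∀ b, r ≤ b → b ≤ s → pth n (ι t) b = 2 * pth n t r - pth n t b) ∧
        (∀ b ≤ n,
          (¬ ∃ r s : ℕ,
            (IsPosArc (e : ℤ) (pth n t) 0 n r s ∨ IsNegArc (e : ℤ) (pth n t) 0 n r s) ∧
              r ≤ b ∧ b ≤ s) →
          pth n (ι t) b = pth n t b) := by
  refine ⟨fun iv d => ?_, reflectTab e n, fun t ht => ⟨inDStd_reflectTab ht,
    reflectTab_reflectTab he ht, resNode_reflectTab ht, pathDeg_reflectTab he ht,
    fun r s harc b h1 h2 => ?_, fun b _ hb => ?_⟩⟩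
  · refine (Set.InvOn.bijOn (f' := reflectTab e n)
      ⟨fun t ht => reflectTab_reflectTab he ht.1, fun t ht => reflectTab_reflectTab he ht.1⟩
      ?_ ?_).ncard_eq
    · rintro t ⟨ht, hres, hdeg⟩
      exact ⟨inDStd_reflectTab ht, fun r => (resNode_reflectTab ht r).trans (hres r),
        by rw [pathDeg_reflectTab he ht, hdeg]⟩
    · rintro t ⟨ht, hres, hdeg⟩
      exact ⟨inDStd_reflectTab ht, fun r => (resNode_reflectTab ht r).trans (hres r),
        by rw [pathDeg_reflectTab he ht, hdeg, neg_neg]⟩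
  · rw [pth_reflectTab ht]
    exact IsArc.reflectArcs_eq harc h1 h2
  · rw [pth_reflectTab ht]
    exact reflectArcs_of_not_inArc fun ⟨r, s, h, h1, h2⟩ => hb ⟨r, s, h, h1.le, h2.le⟩

theorem stmt15 (e p : ℕ) (he : 2 ≤ e) (hp : p = 0 ∨ p.Prime)
    (n x y : ℕ) (hn : n = 2 * x + y) :
    (∀ (iv : Fin n → ZMod e) (d : ℤ),
      Set.ncard {t : Fin n → ℕ × ℕ | InDStd e p n x y t ∧
          (∀ r, resNode e (t r) = iv r) ∧ pathDeg (e : ℤ) (pth n t) 0 n = d} =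
      Set.ncard {t : Fin n → ℕ × ℕ | InDStd e p n x y t ∧
          (∀ r, resNode e (t r) = iv r) ∧ pathDeg (e : ℤ) (pth n t) 0 n = -d}) ∧
    ∃ ι : (Fin n → ℕ × ℕ) → (Fin n → ℕ × ℕ),
      ∀ t, InDStd e p n x y t →
        InDStd e p n x y (ι t) ∧ ι (ι t) = t ∧
        (∀ r, resNode e ((ι t) r) = resNode e (t r)) ∧
        pathDeg (e : ℤ) (pth n (ι t)) 0 n = - pathDeg (e : ℤ) (pth n t) 0 n ∧
        (∀ r s : ℕ,
          (IsPosArc (e : ℤ) (pth n t) 0 n r s ∨ IsNegArc (e : ℤ) (pth n t) 0 n r s) →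
          ∀ b, r ≤ b → b ≤ s → pth n (ι t) b = 2 * pth n t r - pth n t b) ∧
        (∀ b ≤ n,
          (¬ ∃ r s : ℕ,
            (IsPosArc (e : ℤ) (pth n t) 0 n r s ∨ IsNegArc (e : ℤ) (pth n t) 0 n r s) ∧
              r ≤ b ∧ b ≤ s) →
          pth n (ι t) b = pth n t b) :=
  stmt15_general e p he n x y
end
end

section
/- Fix $e\ge2$. Let $\lambda=(2^x,1^y)$ be a two-column partition of $n$ with $y\equiv-j-1\pmod e$ for some $1\le j<e$, say $y=me-j-1$ with $m\in\mathbb Z_{>0}$. For $0\le r\le x-j$ let $Q_r$ be the set of standard $\lambda$-tableaux $\mathtt t$ such that $\pi_{\mathtt t}(2r+me-1)=me-1$ and $\pi_{\mathtt t}(a)\notin\{m'e-1:m'>0\}$ for all $2r+me-1<a\le n$. Then the set of standard $\lambda$-tableaux that are not $e$-regular is the disjoint union $\bigsqcup_{r=0}^{x-j}Q_r$. -/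
open scoped Classical
noncomputable section

-- the shape as a Finset
def shapeF (x y : ℕ) : Finset (ℕ × ℕ) :=
  (Finset.range (x+y)) ×ˢ {0} ∪ (Finset.range x) ×ˢ {1}

lemma mem_shapeF {x y : ℕ} {v : ℕ × ℕ} : v ∈ shapeF x y ↔ memShape2 x y v := by
  simp only [shapeF, Finset.mem_union, Finset.mem_product, Finset.mem_range,
    Finset.mem_singleton, memShape2]
  omega

lemma card_shapeF (x y : ℕ) : (shapeF x y).card = 2 * x + y := by
  rw [shapeF, Finset.card_union_of_disjoint]
  · simp [Finset.card_product]
    ring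
  · rw [Finset.disjoint_left]
    rintro ⟨a, b⟩ h1 h2
    simp only [Finset.mem_product, Finset.mem_range, Finset.mem_singleton] at h1 h2
    omega

lemma col_lt_two {n x y : ℕ} {t : Fin n → ℕ × ℕ} (hsh : ∀ i, memShape2 x y (t i))
    (i : Fin n) : (t i).2 < 2 := by
  rcases hsh i with ⟨_, h⟩ | ⟨_, _, h⟩ <;> omega

lemma cntCol_succ {n : ℕ} (t : Fin n → ℕ × ℕ) {a : ℕ} (ha : a < n) (j : ℕ) :
    cntCol n t (a+1) j = cntCol n t a j + (if (t ⟨a, ha⟩).2 = j then 1 else 0) := by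
  unfold cntCol
  rw [show (Finset.univ.filter fun r : Fin n => (r : ℕ) < a + 1 ∧ (t r).2 = j)
      = (Finset.univ.filter fun r : Fin n => (r : ℕ) < a ∧ (t r).2 = j)
        ∪ (Finset.univ.filter fun r : Fin n => r = ⟨a, ha⟩ ∧ (t r).2 = j) from ?_]
  · rw [Finset.card_union_of_disjoint]
    · congr 1
      by_cases h : (t ⟨a, ha⟩).2 = j
      · rw [if_pos h, Finset.card_eq_one]
        refine ⟨⟨a, ha⟩, ?_⟩
        ext r
        simp only [Finset.mem_filter, Finset.mem_univ, true_and, Finset.mem_singleton]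
        constructor
        · rintro ⟨h1, _⟩; exact h1
        · rintro rfl; exact ⟨rfl, h⟩
      · rw [if_neg h, Finset.card_eq_zero]
        ext r
        simp only [Finset.mem_filter, Finset.mem_univ, true_and, Finset.notMem_empty,
          iff_false, not_and]
        rintro rfl; exact h
    · rw [Finset.disjoint_left]
      rintro r hr hr'
      simp only [Finset.mem_filter, Finset.mem_univ, true_and] at hr hr'
      rw [hr'.1] at hr
      exact absurd hr.1 (lt_irrefl a)
  · ext r
    simp only [Finset.mem_union, Finset.mem_filter, Finset.mem_univ, true_and, Fin.ext_iff]
    constructor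
    · rintro ⟨h1, h2⟩
      rcases Nat.lt_succ_iff_lt_or_eq.1 h1 with h | h
      · exact Or.inl ⟨h, h2⟩
      · exact Or.inr ⟨h, h2⟩
    · rintro (⟨h1, h2⟩ | ⟨h1, h2⟩)
      · exact ⟨Nat.lt_succ_of_lt h1, h2⟩
      · exact ⟨by omega, h2⟩

lemma cntCol_sum {n x y : ℕ} {t : Fin n → ℕ × ℕ} (hsh : ∀ i, memShape2 x y (t i))
    {a : ℕ} (ha : a ≤ n) : cntCol n t a 0 + cntCol n t a 1 = a := by
  induction a with
  | zero => simp [cntCol]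
  | succ a ih =>
    have ha' : a < n := ha
    rw [cntCol_succ t ha', cntCol_succ t ha']
    have := col_lt_two hsh ⟨a, ha'⟩
    have h01 : (t ⟨a, ha'⟩).2 = 0 ∨ (t ⟨a, ha'⟩).2 = 1 := by omega
    rcases h01 with h | h <;> simp [h] <;> omega

lemma cntCol_mono {n : ℕ} (t : Fin n → ℕ × ℕ) {a b : ℕ} (hab : a ≤ b) (j : ℕ) :
    cntCol n t a j ≤ cntCol n t b j := by
  apply Finset.card_le_card
  intro r hr
  simp only [Finset.mem_filter, Finset.mem_univ, true_and] at hr ⊢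
  exact ⟨lt_of_lt_of_le hr.1 hab, hr.2⟩

lemma cntCol_total {n x y : ℕ} (hn : n = 2 * x + y) {t : Fin n → ℕ × ℕ}
    (hinj : Function.Injective t) (hsh : ∀ i, memShape2 x y (t i)) :
    cntCol n t n 0 = x + y ∧ cntCol n t n 1 = x := by
  have hmem : ∀ i, t i ∈ shapeF x y := fun i => mem_shapeF.2 (hsh i)
  have hsurj : ∀ v ∈ shapeF x y, ∃ i, t i = v := by
    set t' : Fin n → ↥(shapeF x y) := fun i => ⟨t i, hmem i⟩ with ht'
    have hinj' : Function.Injective t' := by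
      intro i j h
      exact hinj (congrArg Subtype.val h)
    have hcard : Fintype.card (Fin n) = Fintype.card ↥(shapeF x y) := by
      simp [Fintype.card_coe, card_shapeF, hn]
    have hbij := (Fintype.bijective_iff_injective_and_card t').2 ⟨hinj', hcard⟩
    intro v hv
    obtain ⟨i, hi⟩ := hbij.2 ⟨v, hv⟩
    exact ⟨i, congrArg Subtype.val hi⟩
  have key : ∀ j : ℕ, cntCol n t n j = ((shapeF x y).filter fun v => v.2 = j).card := by
    intro j
    unfold cntCol
    apply Finset.card_bij (fun r _ => t r)
    · intro r hr
      simp only [Finset.mem_filter] at hr ⊢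
      exact ⟨hmem r, hr.2.2⟩
    · intro r _ s _ h; exact hinj h
    · intro v hv
      simp only [Finset.mem_filter] at hv
      obtain ⟨i, hi⟩ := hsurj v hv.1
      exact ⟨i, by simp [hi, hv.2, i.isLt], hi⟩
  constructor
  · rw [key 0]
    rw [show ((shapeF x y).filter fun v => v.2 = 0) = (Finset.range (x+y)) ×ˢ {0} from ?_]
    · simp
    · ext v
      simp only [shapeF, Finset.mem_filter, Finset.mem_union, Finset.mem_product,
        Finset.mem_range, Finset.mem_singleton]
      omega
  · rw [key 1]
    rw [show ((shapeF x y).filter fun v => v.2 = 1) = (Finset.range x) ×ˢ {1} from ?_]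
    · simp
    · ext v
      simp only [shapeF, Finset.mem_filter, Finset.mem_union, Finset.mem_product,
        Finset.mem_range, Finset.mem_singleton]
      omega

lemma ivt_down {π : ℕ → ℤ} {a n : ℕ} {c : ℤ}
    (hstep : ∀ b, a ≤ b → b < n → π (b+1) = π b + 1 ∨ π (b+1) = π b - 1)
    (han : a ≤ n) (hac : c < π a) (hnc : π n ≤ c) :
    ∃ b, a < b ∧ b ≤ n ∧ π b = c := by
  have han' : a < n := by
    rcases lt_or_eq_of_le han with h | h
    · exact h
    · subst h; omega
  have hP : ∃ b, a < b ∧ b ≤ n ∧ π b ≤ c := ⟨n, han', le_refl n, hnc⟩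
  obtain ⟨hab, hbn, hbc⟩ := Nat.find_spec hP
  set b := Nat.find hP with hb
  refine ⟨b, hab, hbn, ?_⟩
  have hb1 : a ≤ b - 1 := by omega
  have hprev : c < π (b - 1) := by
    rcases Nat.lt_or_ge a (b-1) with h | h
    · by_contra hle
      push_neg at hle
      exact Nat.find_min hP (show b - 1 < b by omega) ⟨h, by omega, hle⟩
    · have hba : b - 1 = a := by omega
      rw [hba]; exact hac
  have hstepb := hstep (b-1) hb1 (by omega)
  have hbb : b - 1 + 1 = b := by omega
  rw [hbb] at hstepb
  omega

lemma wall_form {e : ℤ} (he : 0 < e) {z : ℤ} (h : isWall e z) :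
    ∃ k : ℤ, 1 ≤ k ∧ z = k * e - 1 := by
  obtain ⟨h1, h2⟩ := h
  obtain ⟨k, hk⟩ := Int.dvd_of_emod_eq_zero h2
  have hpos : 0 < e * k := by rw [← hk]; exact h1
  have hkpos : 0 < k := by
    by_contra hkn
    push_neg at hkn
    nlinarith
  refine ⟨k, hkpos, ?_⟩
  rw [mul_comm] at hk
  omega

lemma pth_zero (n : ℕ) (t : Fin n → ℕ × ℕ) : pth n t 0 = 0 := by
  simp [pth, cntCol]

lemma pth_step {n x y : ℕ} {t : Fin n → ℕ × ℕ} (hsh : ∀ i, memShape2 x y (t i))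
    {a : ℕ} (ha : a < n) :
    pth n t (a+1) = pth n t a + 1 ∨ pth n t (a+1) = pth n t a - 1 := by
  have h0 := cntCol_succ t ha 0
  have h1 := cntCol_succ t ha 1
  have hc := col_lt_two hsh ⟨a, ha⟩
  unfold pth
  by_cases h : (t ⟨a, ha⟩).2 = 0
  · left; rw [h0, h1]
    simp only [h, if_pos rfl, if_neg (by omega : ¬(0 = 1))]
    push_cast; ring
  · right
    have h' : (t ⟨a, ha⟩).2 = 1 := by omega
    rw [h0, h1]
    simp only [h', if_pos rfl, if_neg (by omega : ¬(1 = 0))]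
    push_cast; ring

lemma regPath_empty (f : ℤ) (n : ℕ) (π : ℕ → ℤ) (h : ¬ (wallTimes f n π).Nonempty) :
    regPath f n π = π := by
  rw [regPath, dif_neg h]

lemma regPath_neg (f : ℤ) (n : ℕ) (π : ℕ → ℤ) (h : (wallTimes f n π).Nonempty)
    (hlt : ¬ π n < π ((wallTimes f n π).max' h)) :
    regPath f n π = π := by
  rw [regPath, dif_pos h]
  exact if_neg hlt

lemma regPath_pos (f : ℤ) (n : ℕ) (π : ℕ → ℤ) (h : (wallTimes f n π).Nonempty)
    (hlt : π n < π ((wallTimes f n π).max' h)) :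
    regPath f n π = fun b => if b ≤ (wallTimes f n π).max' h then π b
      else 2 * π ((wallTimes f n π).max' h) - π b := by
  rw [regPath, dif_pos h]
  exact if_pos hlt

lemma mem_wallTimes {f : ℤ} {n : ℕ} {π : ℕ → ℤ} {a : ℕ} :
    a ∈ wallTimes f n π ↔ a ≤ n ∧ isWall f (π a) := by
  rw [wallTimes, Finset.mem_filter, Finset.mem_range, Nat.lt_succ_iff]

theorem stmt18 (e x y m j n : ℕ) (he : 2 ≤ e) (hj1 : 1 ≤ j) (hje : j < e)
    (hm : 1 ≤ m) (hy : y + j + 1 = m * e) (hxj : j ≤ x) (hn : n = 2 * x + y)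
    (t : Fin n → ℕ × ℕ) (ht : IsStdTab n t) (hsh : ∀ i, memShape2 x y (t i)) :
    (regPath (e : ℤ) n (pth n t) ≠ pth n t ↔
      ∃ r ≤ x - j, pth n t (2 * r + m * e - 1) = (m * e : ℤ) - 1 ∧
        ∀ a, 2 * r + m * e - 1 < a → a ≤ n → ¬ isWall (e : ℤ) (pth n t a)) ∧
    (∀ r r', r ≤ x - j → r' ≤ x - j →
      (pth n t (2 * r + m * e - 1) = (m * e : ℤ) - 1 ∧
        ∀ a, 2 * r + m * e - 1 < a → a ≤ n → ¬ isWall (e : ℤ) (pth n t a)) →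
      (pth n t (2 * r' + m * e - 1) = (m * e : ℤ) - 1 ∧
        ∀ a, 2 * r' + m * e - 1 < a → a ≤ n → ¬ isWall (e : ℤ) (pth n t a)) →
      r = r') := by
  obtain ⟨hinj, -, -⟩ := ht
  have hcastme : ((m : ℤ) * e) = ((m * e : ℕ) : ℤ) := by push_cast; ring
  rw [show ((m : ℤ) * e - 1) = ((m * e : ℕ) : ℤ) - 1 from by rw [hcastme]]
  set N := m * e with hN
  set π := pth n t with hπ
  have he' : (0 : ℤ) < (e : ℕ) := by exact_mod_cast lt_of_lt_of_le Nat.zero_lt_two he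
  have hme2 : 2 ≤ N := by
    calc 2 ≤ e := he
    _ ≤ m * e := Nat.le_mul_of_pos_left e hm
  have hstep : ∀ a, a < n → π (a+1) = π a + 1 ∨ π (a+1) = π a - 1 :=
    fun a ha => pth_step hsh ha
  have htot := cntCol_total hn hinj hsh
  have hπn : π n = (y : ℤ) := by
    rw [hπ]; unfold pth; rw [htot.1, htot.2]; push_cast; ring
  have hwall_me : isWall (e : ℤ) ((N : ℤ) - 1) := by
    constructor
    · have : (2 : ℤ) ≤ (N : ℤ) := by exact_mod_cast hme2
      omega
    · have hh : (N : ℤ) - 1 + 1 = (m : ℤ) * e := by rw [hN]; push_cast; ring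
      rw [hh, Int.mul_emod_left]
  -- helper: the endpoint bound needed for "A' ≤ n"
  have hAle : ∀ r : ℕ, r ≤ x - j → 2 * r + N - 1 ≤ n := by
    intro r hr; omega
  constructor
  · constructor
    · -- forward direction
      intro hne
      by_cases hW : (wallTimes (e : ℤ) n π).Nonempty
      · set A := (wallTimes (e : ℤ) n π).max' hW with hA
        by_cases hlt : π n < π A
        · -- main case
          have hA_mem := (wallTimes (e : ℤ) n π).max'_mem hW
          rw [← hA, mem_wallTimes] at hA_mem
          obtain ⟨hAn', hAw⟩ := hA_mem
          obtain ⟨k, hk1, hkz⟩ := wall_form he' hAw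
          have hπA : π A = (N : ℤ) - 1 := by
            rcases lt_trichotomy k (m : ℤ) with hkm | hkm | hkm
            · exfalso
              have hkk : k ≤ (m : ℤ) - 1 := by omega
              have := mul_le_mul_of_nonneg_right hkk he'.le
              have hNz : ((m : ℤ) - 1) * e = (N : ℤ) - e := by rw [hN]; push_cast; ring
              rw [hNz] at this
              have hyz : (y : ℤ) = (N : ℤ) - j - 1 := by
                have : y + j + 1 = N := hy
                omega
              rw [hπn, hyz] at hlt
              have hje' : (j : ℤ) < e := by exact_mod_cast hje
              omega
            · rw [hkz, hkm, hcastme]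
            · exfalso
              have hkk : (m : ℤ) + 1 ≤ k := by omega
              have := mul_le_mul_of_nonneg_right hkk he'.le
              have hNz : ((m : ℤ) + 1) * e = (N : ℤ) + e := by rw [hN]; push_cast; ring
              rw [hNz] at this
              have hyz : (y : ℤ) = (N : ℤ) - j - 1 := by
                have : y + j + 1 = N := hy
                omega
              have hj1' : (1 : ℤ) ≤ j := by exact_mod_cast hj1
              obtain ⟨b, hb1, hb2, hb3⟩ := ivt_down (c := (N : ℤ) - 1)
                (fun b hb hb' => hstep b hb') hAn' (by omega) (by rw [hπn, hyz]; omega)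
              have hbw : b ∈ wallTimes (e : ℤ) n π :=
                mem_wallTimes.2 ⟨hb2, by rw [hb3]; exact hwall_me⟩
              have := Finset.le_max' _ b hbw
              rw [← hA] at this
              omega
          -- extract r
          set r := cntCol n t A 1 with hr
          have hsum := cntCol_sum hsh hAn'
          have hc0 : cntCol n t A 0 ≤ x + y := htot.1 ▸ cntCol_mono t hAn' 0
          have hπAdef : (cntCol n t A 0 : ℤ) - (cntCol n t A 1 : ℤ) = (N : ℤ) - 1 := hπA
          have hAeq : A = 2 * r + N - 1 := by omega
          have hrle : r ≤ x - j := by omega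
          refine ⟨r, hrle, by rw [← hAeq]; exact hπA, ?_⟩
          intro a ha1 ha2 hwa
          rw [← hAeq] at ha1
          have : a ∈ wallTimes (e : ℤ) n π := mem_wallTimes.2 ⟨ha2, hwa⟩
          have := Finset.le_max' _ a this
          rw [← hA] at this
          omega
        · exact absurd (regPath_neg _ _ _ hW hlt) hne
      · exact absurd (regPath_empty _ _ _ hW) hne
    · -- reverse direction
      rintro ⟨r, hrle, hπr, hnowall⟩
      set A := 2 * r + N - 1 with hAdef
      have hAn : A ≤ n := hAle r hrle
      have hAwall : isWall (e : ℤ) (π A) := by rw [hπr]; exact hwall_me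
      have hAmem : A ∈ wallTimes (e : ℤ) n π := mem_wallTimes.2 ⟨hAn, hAwall⟩
      have hW : (wallTimes (e : ℤ) n π).Nonempty := ⟨A, hAmem⟩
      have hmax : (wallTimes (e : ℤ) n π).max' hW = A := by
        apply le_antisymm
        · by_contra hcon
          push_neg at hcon
          have hmem := (wallTimes (e : ℤ) n π).max'_mem hW
          rw [mem_wallTimes] at hmem
          exact hnowall _ hcon hmem.1 hmem.2
        · exact Finset.le_max' _ _ hAmem
      have hyz : (y : ℤ) = (N : ℤ) - j - 1 := by
        have : y + j + 1 = N := hy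
        omega
      have hj1' : (1 : ℤ) ≤ j := by exact_mod_cast hj1
      have hlt : π n < π ((wallTimes (e : ℤ) n π).max' hW) := by
        rw [hmax, hπn, hπr, hyz]; omega
      have hAltn : A < n := by
        rcases lt_or_eq_of_le hAn with h | h
        · exact h
        · exfalso
          rw [hmax] at hlt
          rw [h] at hlt
          omega
      rw [regPath_pos _ _ _ hW hlt]
      intro hcon
      have := congrFun hcon n
      simp only [hmax] at this
      rw [if_neg (by omega)] at this
      rw [hmax, hπr] at hlt
      rw [hπr] at this
      omega
  · -- uniqueness
    rintro r r' hrle hrle' ⟨h1, h2⟩ ⟨h1', h2'⟩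
    by_contra hne
    rcases lt_trichotomy r r' with h | h | h
    · exact h2 (2 * r' + N - 1) (by omega) (hAle r' hrle')
        (by rw [h1']; exact hwall_me)
    · exact hne h
    · exact h2' (2 * r + N - 1) (by omega) (hAle r hrle)
        (by rw [h1]; exact hwall_me)
end
end

section
/- Fix $e\ge2$ and a prime $p$. Let $\pi\in\mathsf P^+_n$, let $\eta=\operatorname{reg}_{e,p}(\pi)$, and let $Z=\{z_1>\cdots>z_h\}$ be the regularisation set of $\pi$, i.e. $\eta=\operatorname{reg}_{ep^{z_h}}(\cdots\operatorname{reg}_{ep^{z_1}}(\pi)\cdots)$ is the canonical regularisation equation. For $1\le i\le h$ let $w_i$ be the maximal element of $[0,n]$ with $\eta(w_i)\in\{mp^{z_i}e-1:m\in\mathbb Z_{>0}\}$ (or $0$ if none exists); set $w_0=0$ and let $w_{h+1}$ be maximal with $\pi(w_{h+1})\in\{me-1:m>0\}$ (or $0$). Then for all $0\le i\le h$: $\deg_e(\eta[w_i,w_{i+1}])=(-1)^i\deg_e(\pi[w_i,w_{i+1}])$. -/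
open scoped Classical
noncomputable section

section Helpers

theorem isWall_iff_dvd (e x : ℤ) : isWall e x ↔ 0 < x + 1 ∧ e ∣ (x + 1) := by
  unfold isWall
  exact and_congr Iff.rfl ⟨Int.dvd_of_emod_eq_zero, Int.emod_eq_zero_of_dvd⟩

theorem isWall_of_dvd {f f' x : ℤ} (hd : f' ∣ f) (hx : isWall f x) : isWall f' x := by
  rw [isWall_iff_dvd] at hx ⊢
  exact ⟨hx.1, hd.trans hx.2⟩

theorem not_isWall_gap {f W x : ℤ} (hW : isWall f W) (h1 : W < x) (h2 : x < W + f) :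
    ¬ isWall f x := by
  rw [isWall_iff_dvd] at hW ⊢
  rintro ⟨hx1, hx2⟩
  have hd : f ∣ (x + 1) - (W + 1) := dvd_sub hx2 hW.2
  have hpos : 0 < (x + 1) - (W + 1) := by linarith
  have := Int.le_of_dvd hpos hd
  linarith

theorem wall_transfer {e : ℤ} (i : ℕ) {c x y : ℤ} (hc : e ∣ c) (hx : 0 ≤ x) (hy : 0 ≤ y)
    (hxy : y = (-1 : ℤ) ^ i * (x + 1) + c - 1) : (isWall e y ↔ isWall e x) := by
  rw [isWall_iff_dvd, isWall_iff_dvd]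
  have hx1 : (0:ℤ) < x + 1 := by linarith
  have hy1 : (0:ℤ) < y + 1 := by linarith
  simp only [hx1, hy1, true_and]
  rcases Nat.even_or_odd i with hi | hi
  · have hpow : (-1 : ℤ) ^ i = 1 := Even.neg_one_pow hi
    rw [hpow] at hxy
    have : y + 1 = (x + 1) + c := by linarith
    rw [this]
    exact ⟨fun hdd => by simpa using dvd_sub hdd hc, fun hdd => dvd_add hdd hc⟩
  · have hpow : (-1 : ℤ) ^ i = -1 := Odd.neg_one_pow hi
    rw [hpow] at hxy
    have : y + 1 = c - (x + 1) := by linarith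
    rw [this]
    constructor
    · intro hdd
      have := dvd_sub hc hdd
      simpa using this
    · intro hdd
      exact dvd_sub hc hdd

theorem not_wall_both {e u v : ℤ} (he : 2 ≤ e) (hstep : v = u + 1 ∨ v = u - 1)
    (hu : isWall e u) (hv : isWall e v) : False := by
  rw [isWall_iff_dvd] at hu hv
  have hd : e ∣ (v + 1) - (u + 1) := dvd_sub hv.2 hu.2
  rcases hstep with rfl | rfl
  · have : e ∣ 1 := by simpa using hd
    have := Int.le_of_dvd one_pos this
    linarith
  · have : e ∣ 1 := by
      have : e ∣ (-1 : ℤ) := by simpa using hd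
      exact (dvd_neg).mp this
    have := Int.le_of_dvd one_pos this
    linarith

/-- Discrete intermediate value theorem for ±1 paths. -/
theorem path_ivt {s : ℕ → ℤ} {u v : ℕ}
    (hstep : ∀ a, u ≤ a → a < v → s (a + 1) = s a + 1 ∨ s (a + 1) = s a - 1)
    {W : ℤ} : ∀ c, ∀ b, u ≤ b → b ≤ c → c ≤ v → W ≤ s b → s c ≤ W →
    ∃ d, b ≤ d ∧ d ≤ c ∧ s d = W := by
  intro c
  induction c with
  | zero =>
    intro b hub hbc hcv h1 h2
    have hb0 : b = 0 := Nat.le_zero.mp hbc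
    subst hb0
    exact ⟨0, le_refl _, le_refl _, le_antisymm h2 h1⟩
  | succ c ih =>
    intro b hub hbc hcv h1 h2
    rcases Nat.eq_or_lt_of_le hbc with heq | hlt
    · subst heq
      exact ⟨c + 1, le_refl _, le_refl _, le_antisymm h2 h1⟩
    · have hbc' : b ≤ c := Nat.lt_succ_iff.mp hlt
      by_cases hsc : s c ≤ W
      · obtain ⟨d, h1', h2', h3'⟩ := ih b hub hbc' (le_trans (Nat.le_succ c) hcv) h1 hsc
        exact ⟨d, h1', le_trans h2' (Nat.le_succ c), h3'⟩
      · push_neg at hsc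
        have huc : u ≤ c := le_trans hub hbc'
        have hcv' : c < v := Nat.lt_of_succ_le hcv
        have := hstep c huc hcv'
        have : s (c + 1) = W := by omega
        exact ⟨c + 1, le_of_lt hlt, le_refl _, this⟩

end Helpers
section Deg

theorem degStep_translate {e c u v : ℤ} (hc : e ∣ c) (hu : 0 ≤ u) (hv : 0 ≤ v)
    (hu' : 0 ≤ u + c) (hv' : 0 ≤ v + c) :
    degStep e (u + c) (v + c) = degStep e u v := by
  have wu : isWall e (u + c) ↔ isWall e u :=
    wall_transfer 0 hc hu hu' (by ring)
  have wv : isWall e (v + c) ↔ isWall e v :=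
    wall_transfer 0 hc hv hv' (by ring)
  have hlt : v + c < u + c ↔ v < u := by constructor <;> intro <;> linarith
  unfold degStep
  simp only [wu, wv, hlt]

theorem degStep_reflect {e c u v : ℤ} (he : 2 ≤ e) (hc : e ∣ c)
    (hu : 0 ≤ u) (hv : 0 ≤ v) (hu' : 0 ≤ c - 2 - u) (hv' : 0 ≤ c - 2 - v)
    (hstep : v = u + 1 ∨ v = u - 1) :
    degStep e (c - 2 - u) (c - 2 - v) =
      -degStep e u v + (if isWall e u then (1:ℤ) else 0)
        - (if isWall e v then (1:ℤ) else 0) := by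
  have wu : isWall e (c - 2 - u) ↔ isWall e u :=
    wall_transfer 1 hc hu hu' (by ring)
  have wv : isWall e (c - 2 - v) ↔ isWall e v :=
    wall_transfer 1 hc hv hv' (by ring)
  have hnb : ¬ (isWall e u ∧ isWall e v) := fun ⟨h1, h2⟩ => not_wall_both he hstep h1 h2
  unfold degStep
  rcases hstep with rfl | rfl
  · have h1 : ¬ (u + 1 < u) := by linarith
    have h2 : c - 2 - (u + 1) < c - 2 - u := by linarith
    by_cases hwu : isWall e u <;> by_cases hwv : isWall e (u + 1) <;>
      simp [wu, wv, h1, h2, hwu, hwv] <;> tauto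
  · have h1 : u - 1 < u := by linarith
    have h2 : ¬ (c - 2 - (u - 1) < c - 2 - u) := by linarith
    by_cases hwu : isWall e u <;> by_cases hwv : isWall e (u - 1) <;>
      simp [wu, wv, h1, h2, hwu, hwv] <;> tauto

theorem deg_motion {e : ℤ} (he : 2 ≤ e) (i : ℕ) {c : ℤ} (hc : e ∣ c)
    {π η : ℕ → ℤ} {r s : ℕ} (hrs : r ≤ s)
    (hπ : ∀ b, r ≤ b → b ≤ s → 0 ≤ π b) (hη : ∀ b, r ≤ b → b ≤ s → 0 ≤ η b)
    (hsteps : ∀ b, r ≤ b → b < s → π (b + 1) = π b + 1 ∨ π (b + 1) = π b - 1)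
    (hrel : ∀ b, r ≤ b → b ≤ s → η b = (-1 : ℤ) ^ i * (π b + 1) + c - 1)
    (hodd : Odd i → isWall e (π r) ∧ isWall e (π s)) :
    pathDeg e η r s = (-1 : ℤ) ^ i * pathDeg e π r s := by
  rcases Nat.even_or_odd i with hi | hi
  · -- translation case
    have hpow : (-1 : ℤ) ^ i = 1 := Even.neg_one_pow hi
    rw [hpow, one_mul]
    unfold pathDeg
    apply Finset.sum_congr rfl
    intro b hb
    rw [Finset.mem_Ico] at hb
    have hb1 : b ≤ s := le_of_lt hb.2
    have hb2 : b + 1 ≤ s := hb.2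
    have e1 : η b = π b + c := by rw [hrel b hb.1 hb1, hpow]; ring
    have e2 : η (b + 1) = π (b + 1) + c := by
      rw [hrel (b + 1) (le_trans hb.1 (Nat.le_succ b)) hb2, hpow]; ring
    rw [e1, e2]
    exact degStep_translate hc (hπ b hb.1 hb1) (hπ (b + 1) (le_trans hb.1 (Nat.le_succ b)) hb2)
      (e1 ▸ hη b hb.1 hb1) (e2 ▸ hη (b + 1) (le_trans hb.1 (Nat.le_succ b)) hb2)
  · -- reflection case
    have hpow : (-1 : ℤ) ^ i = -1 := Odd.neg_one_pow hi
    obtain ⟨hwr, hws⟩ := hodd hi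
    have key : ∀ b, r ≤ b → b < s →
        degStep e (η b) (η (b + 1)) = -degStep e (π b) (π (b + 1))
          + ((if isWall e (π b) then (1:ℤ) else 0) - (if isWall e (π (b+1)) then (1:ℤ) else 0)) := by
      intro b hb1 hb2
      have hb1' : b ≤ s := le_of_lt hb2
      have hbr : r ≤ b + 1 := le_trans hb1 (Nat.le_succ b)
      have hb2' : b + 1 ≤ s := hb2
      have e1 : η b = c - 2 - π b := by rw [hrel b hb1 hb1', hpow]; ring
      have e2 : η (b + 1) = c - 2 - π (b + 1) := by rw [hrel (b + 1) hbr hb2', hpow]; ring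
      rw [e1, e2]
      rw [degStep_reflect he hc (hπ b hb1 hb1') (hπ (b + 1) hbr hb2')
        (e1 ▸ hη b hb1 hb1') (e2 ▸ hη (b + 1) hbr hb2') (hsteps b hb1 hb2)]
      ring
    unfold pathDeg
    have hsum : ∑ b ∈ Finset.Ico r s, degStep e (η b) (η (b + 1)) =
        ∑ b ∈ Finset.Ico r s, (-degStep e (π b) (π (b + 1))
          + ((if isWall e (π b) then (1:ℤ) else 0) - (if isWall e (π (b+1)) then (1:ℤ) else 0))) :=
      Finset.sum_congr rfl fun b hb =>
        key b (Finset.mem_Ico.mp hb).1 (Finset.mem_Ico.mp hb).2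
    rw [hsum, Finset.sum_add_distrib, Finset.sum_neg_distrib]
    have tele : ∑ b ∈ Finset.Ico r s,
        ((if isWall e (π b) then (1:ℤ) else 0) - (if isWall e (π (b+1)) then (1:ℤ) else 0))
        = (if isWall e (π r) then (1:ℤ) else 0) - (if isWall e (π s) then (1:ℤ) else 0) := by
      rw [Finset.sum_Ico_eq_sum_range]
      have h2 : r + (s - r) = s := by omega
      have h3 := Finset.sum_range_sub'
        (f := fun k => if isWall e (π (r + k)) then (1:ℤ) else 0) (s - r)
      simp only [Nat.succ_eq_add_one, Nat.add_zero, ← Nat.add_assoc] at h3 ⊢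
      rw [h2] at h3
      rw [h3]
    rw [tele, if_pos hwr, if_pos hws, hpow]
    ring

end Deg
def refA (f : ℤ) (n : ℕ) (s : ℕ → ℤ) : ℕ :=
  if h : (wallTimes f n s).Nonempty then (wallTimes f n s).max' h else 0

theorem reg_struct {f : ℤ} (hf : 2 ≤ f) {n : ℕ} {s : ℕ → ℤ} (hs : IsPathOn s 0 n)
    (hne : regPath f n s ≠ s) :
    refA f n s ≤ n ∧ isWall f (s (refA f n s)) ∧
    (∀ b, b ≤ n → isWall f (s b) → b ≤ refA f n s) ∧
    (∀ b, b ≤ refA f n s → regPath f n s b = s b) ∧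
    (∀ b, refA f n s < b → regPath f n s b = 2 * s (refA f n s) - s b) ∧
    (∀ b, refA f n s < b → b ≤ n → s (refA f n s) - f < s b ∧ s b < s (refA f n s)) ∧
    IsPathOn (regPath f n s) 0 n := by
  have hw : (wallTimes f n s).Nonempty := by
    by_contra hcon
    exact hne (by unfold regPath; rw [dif_neg hcon])
  have hrefA : refA f n s = (wallTimes f n s).max' hw := by
    unfold refA; rw [dif_pos hw]
  set A := (wallTimes f n s).max' hw with hAdef
  have hmem : A ∈ wallTimes f n s := (wallTimes f n s).max'_mem hw
  rw [wallTimes, Finset.mem_filter, Finset.mem_range] at hmem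
  have hAn : A ≤ n := Nat.lt_succ_iff.mp hmem.1
  have hAwall : isWall f (s A) := hmem.2
  have hmax : ∀ b, b ≤ n → isWall f (s b) → b ≤ A := by
    intro b hb hwb
    apply Finset.le_max'
    rw [wallTimes, Finset.mem_filter, Finset.mem_range]
    exact ⟨Nat.lt_succ_of_le hb, hwb⟩
  have hlt : s n < s A := by
    by_contra hcon
    apply hne
    unfold regPath
    rw [dif_pos hw]
    exact if_neg hcon
  have hform : regPath f n s = fun b => if b ≤ A then s b else 2 * s A - s b := by
    unfold regPath
    rw [dif_pos hw]
    exact if_pos hlt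
  have hfix : ∀ b, b ≤ A → regPath f n s b = s b := by
    intro b hb; rw [hform]; exact if_pos hb
  have hrefl : ∀ b, A < b → regPath f n s b = 2 * s A - s b := by
    intro b hb; rw [hform]; exact if_neg (by omega)
  -- bounds
  have hupper : ∀ b, A < b → b ≤ n → s b < s A := by
    intro b hb1 hb2
    by_contra hcon
    push_neg at hcon
    obtain ⟨d, hd1, hd2, hd3⟩ :=
      path_ivt hs.2 n b (Nat.zero_le b) hb2 (le_refl n) hcon (le_of_lt hlt)
    have : d ≤ A := hmax d hd2 (hd3 ▸ hAwall)
    omega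
  have hlower : ∀ b, A < b → b ≤ n → s A - f < s b := by
    intro b hb1 hb2
    by_contra hcon
    push_neg at hcon
    obtain ⟨d, hd1, hd2, hd3⟩ :=
      path_ivt hs.2 b A (Nat.zero_le A) (le_of_lt hb1) hb2 (by linarith) hcon
    by_cases hpos : 0 < s A - f + 1
    · have hwd : isWall f (s d) := by
        rw [hd3, isWall_iff_dvd]
        refine ⟨hpos, ?_⟩
        have := (isWall_iff_dvd f (s A)).mp hAwall
        have h2 : s A - f + 1 = (s A + 1) - f := by ring
        rw [h2]
        exact dvd_sub this.2 (dvd_refl f)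
      have hdA : d ≤ A := hmax d (le_trans hd2 hb2) hwd
      have : d = A := le_antisymm hdA hd1
      rw [this] at hd3
      omega
    · have : 0 ≤ s d := hs.1 d (Nat.zero_le d) (le_trans hd2 hb2)
      omega
  refine ⟨hrefA ▸ hAn, hrefA ▸ hAwall, by rw [hrefA]; exact hmax,
    by rw [hrefA]; exact hfix, by rw [hrefA]; exact hrefl,
    by rw [hrefA]; exact fun b h1 h2 => ⟨hlower b h1 h2, hupper b h1 h2⟩, ?_⟩
  constructor
  · intro b _ hb
    by_cases hbA : b ≤ A
    · rw [hfix b hbA]; exact hs.1 b (Nat.zero_le b) hb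
    · push_neg at hbA
      rw [hrefl b hbA]
      have h1 := hupper b hbA hb
      have h2 := hs.1 A (Nat.zero_le A) hAn
      linarith
  · intro b _ hb
    rcases hs.2 b (Nat.zero_le b) hb with hst | hst
    · by_cases hbA : b + 1 ≤ A
      · rw [hfix b (by omega), hfix (b + 1) hbA, hst]; left; rfl
      · by_cases hbA2 : b ≤ A
        · have hbe : b = A := by omega
          rw [hfix b hbA2, hrefl (b + 1) (by omega), hst, hbe]
          right; ring
        · push_neg at hbA2
          rw [hrefl b (by omega), hrefl (b + 1) (by omega), hst]
          right; ring
    · by_cases hbA : b + 1 ≤ A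
      · rw [hfix b (by omega), hfix (b + 1) hbA, hst]; right; rfl
      · by_cases hbA2 : b ≤ A
        · have hbe : b = A := by omega
          rw [hfix b hbA2, hrefl (b + 1) (by omega), hst, hbe]
          left; ring
        · push_neg at hbA2
          rw [hrefl b (by omega), hrefl (b + 1) (by omega), hst]
          left; ring
theorem stmt19 (e p : ℕ) (he : 2 ≤ e) (hp : p.Prime) (n h : ℕ)
    (π : ℕ → ℤ) (h0 : π 0 = 0) (hpath : IsPathOn π 0 n)
    (seq : ℕ → ℕ → ℤ) (z : ℕ → ℕ) (w : ℕ → ℕ)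
    (hseq0 : seq 0 = π)
    (hdec : ∀ i, 1 ≤ i → i < h → z (i + 1) < z i)
    (hstep : ∀ i, 1 ≤ i → i ≤ h →
      seq i = regPath ((e : ℤ) * (p : ℤ) ^ z i) n (seq (i - 1)) ∧
      seq i ≠ seq (i - 1) ∧
      ∀ w', z i < w' →
        regPath ((e : ℤ) * (p : ℤ) ^ w') n (seq (i - 1)) = seq (i - 1))
    (hfinal : ∀ z' : ℕ, regPath ((e : ℤ) * (p : ℤ) ^ z') n (seq h) = seq h)
    (hw0 : w 0 = 0)
    (hwi : ∀ i, 1 ≤ i → i ≤ h →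
      ((w i ≤ n ∧ isWall ((e : ℤ) * (p : ℤ) ^ z i) (seq h (w i)) ∧
          ∀ b, w i < b → b ≤ n → ¬ isWall ((e : ℤ) * (p : ℤ) ^ z i) (seq h b)) ∨
       (w i = 0 ∧ ∀ b ≤ n, ¬ isWall ((e : ℤ) * (p : ℤ) ^ z i) (seq h b))))
    (hwlast :
      (w (h + 1) ≤ n ∧ isWall (e : ℤ) (π (w (h + 1))) ∧
          ∀ b, w (h + 1) < b → b ≤ n → ¬ isWall (e : ℤ) (π b)) ∨
      (w (h + 1) = 0 ∧ ∀ b ≤ n, ¬ isWall (e : ℤ) (π b))) :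
    ∀ i ≤ h, pathDeg (e : ℤ) (seq h) (w i) (w (i + 1)) =
      (-1 : ℤ) ^ i * pathDeg (e : ℤ) π (w i) (w (i + 1)) := by
  -- basic numeric facts
  have he' : (2 : ℤ) ≤ (e : ℤ) := by exact_mod_cast he
  have hp1 : (1 : ℤ) ≤ (p : ℤ) := by exact_mod_cast hp.one_lt.le
  have hF2 : ∀ i : ℕ, (2 : ℤ) ≤ (e : ℤ) * (p : ℤ) ^ z i := by
    intro i
    have h1 : (1 : ℤ) ≤ (p : ℤ) ^ z i := one_le_pow₀ hp1
    nlinarith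
  have heF : ∀ i : ℕ, (e : ℤ) ∣ (e : ℤ) * (p : ℤ) ^ z i := fun i => ⟨(p : ℤ) ^ z i, rfl⟩
  have hzmono : ∀ i j, 1 ≤ i → i ≤ j → j ≤ h → z j ≤ z i := by
    intro i j hi hij
    induction j with
    | zero => omega
    | succ j ihj =>
      intro hjh
      rcases Nat.eq_or_lt_of_le hij with heq | hlt
      · rw [heq]
      · have h1 : i ≤ j := by omega
        have h2 : j ≤ h := by omega
        have h3 := hdec j (by omega) (by omega)
        have := ihj h1 h2
        omega
  have hFdvd : ∀ i j, 1 ≤ i → i ≤ j → j ≤ h →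
      ((e : ℤ) * (p : ℤ) ^ z j) ∣ ((e : ℤ) * (p : ℤ) ^ z i) :=
    fun i j h1 h2 h3 =>
      mul_dvd_mul_left (e : ℤ) (pow_dvd_pow (p : ℤ) (hzmono i j h1 h2 h3))
  -- the reflection times, wall values, and motions
  obtain ⟨A, hA0, hAs⟩ : ∃ A : ℕ → ℕ, A 0 = 0 ∧
      ∀ i, A (i + 1) = refA ((e : ℤ) * (p : ℤ) ^ z (i + 1)) n (seq i) :=
    ⟨fun i => if i = 0 then 0 else refA ((e : ℤ) * (p : ℤ) ^ z i) n (seq (i - 1)),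
      rfl, fun i => by simp⟩
  obtain ⟨V, hV⟩ : ∃ V : ℕ → ℤ, ∀ i, V (i + 1) = seq i (A (i + 1)) :=
    ⟨fun i => seq (i - 1) (A i), fun i => by simp⟩
  obtain ⟨S, hS0, hSs⟩ : ∃ S : ℕ → ℤ → ℤ,
      (∀ x, S 0 x = x) ∧ ∀ i x, S (i + 1) x = 2 * V (i + 1) - S i x :=
    ⟨fun i => Nat.rec (motive := fun _ => ℤ → ℤ) (fun x => x)
        (fun j Sj x => 2 * V (j + 1) - Sj x) i,
      fun x => rfl, fun i x => rfl⟩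
  -- MAIN induction
  have main : ∀ i, i ≤ h → IsPathOn (seq i) 0 n ∧ seq i 0 = 0 ∧ A i ≤ n ∧
      (∀ b, A i ≤ b → b ≤ n → seq i b = S i (π b)) ∧
      (1 ≤ i → isWall ((e : ℤ) * (p : ℤ) ^ z i) (V i) ∧
        seq i (A i) = V i ∧
        (∀ b, b ≤ A i → seq i b = seq (i - 1) b) ∧
        (∀ b, A i < b → b ≤ n →
          V i < seq i b ∧ seq i b < V i + (e : ℤ) * (p : ℤ) ^ z i) ∧
        A (i - 1) ≤ A i) := by
    intro i
    induction i with
    | zero =>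
      intro _
      refine ⟨hseq0 ▸ hpath, hseq0 ▸ h0, by omega, ?_, by omega⟩
      intro b _ _
      rw [hseq0, hS0]
    | succ i ih =>
      intro hih
      have hi : i ≤ h := by omega
      obtain ⟨P1, P2, P3, P4, P5⟩ := ih hi
      obtain ⟨hs1, hs2, _⟩ := hstep (i + 1) (by omega) hih
      simp only [Nat.add_sub_cancel] at hs1 hs2
      have hne' : regPath ((e : ℤ) * (p : ℤ) ^ z (i + 1)) n (seq i) ≠ seq i := by
        rw [← hs1]; exact hs2
      obtain ⟨R1, R2, R3, R4, R5, R6, R7⟩ := reg_struct (hF2 (i + 1)) P1 hne'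
      rw [← hAs i] at R1 R2 R3 R4 R5 R6
      have hVi : V (i + 1) = seq i (A (i + 1)) := hV i
      have hAA : A i ≤ A (i + 1) := by
        rcases Nat.eq_zero_or_pos i with h0' | hpos
        · rw [h0', hA0]; omega
        · obtain ⟨Q1, Q2, _⟩ := P5 hpos
          apply R3 (A i) P3
          rw [Q2]
          exact isWall_of_dvd (hFdvd i (i + 1) hpos (by omega) hih) Q1
      refine ⟨hs1 ▸ R7, ?_, R1, ?_, ?_⟩
      · rw [hs1, R4 0 (by omega), P2]
      · -- motion relation
        intro b hb1 hb2
        rcases Nat.eq_or_lt_of_le hb1 with heq | hlt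
        · rw [← heq, hs1, R4 _ (le_refl _), hSs, ← P4 (A (i + 1)) hAA R1, ← hVi]
          ring
        · rw [hs1, R5 b hlt, hSs, ← P4 b (by omega) hb2, hVi]
      · intro _
        refine ⟨hVi ▸ R2, by rw [hs1, R4 _ (le_refl _), hVi],
          ?_, ?_, by simpa using hAA⟩
        · intro b hb
          rw [hs1, R4 b hb, Nat.add_sub_cancel]
        · intro b hb1 hb2
          rw [hs1, R5 b hb1]
          have := R6 b hb1 hb2
          rw [← hVi] at this
          constructor <;> linarith
  -- motion form
  have motion : ∀ i, i ≤ h → ∃ c : ℤ, (e : ℤ) ∣ c ∧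
      ∀ x, S i x = (-1 : ℤ) ^ i * (x + 1) + c - 1 := by
    intro i
    induction i with
    | zero =>
      intro _
      exact ⟨0, dvd_zero _, fun x => by rw [hS0]; ring⟩
    | succ i ih =>
      intro hih
      obtain ⟨c, hc1, hc2⟩ := ih (by omega)
      obtain ⟨Q1, _⟩ := (main (i + 1) hih).2.2.2.2 (by omega)
      have hVwall : (e : ℤ) ∣ V (i + 1) + 1 :=
        ((heF (i + 1)).trans ((isWall_iff_dvd _ _).mp Q1).2)
      refine ⟨2 * (V (i + 1) + 1) - c, ?_, ?_⟩
      · exact dvd_sub (Dvd.dvd.mul_left hVwall 2) hc1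
      · intro x
        rw [hSs, hc2 x, pow_succ]
        ring
  -- transport to later stages
  have tr : ∀ j, j ≤ h → ∀ i, 1 ≤ i → i ≤ j →
      A i ≤ A j ∧ (∀ b, b ≤ A i → seq j b = seq i b) ∧
      (∀ b, A i < b → b ≤ n → ¬ isWall ((e : ℤ) * (p : ℤ) ^ z i) (seq j b)) := by
    intro j
    induction j with
    | zero => intro _ i h1 h2; omega
    | succ j ihj =>
      intro hj1 i h1 h2
      obtain ⟨M1, M2, M3, M4, M5⟩ := main (j + 1) hj1
      obtain ⟨Q1, Q2, Q3, Q4, Q5⟩ := M5 (by omega)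
      simp only [Nat.add_sub_cancel] at Q3 Q5
      rcases Nat.eq_or_lt_of_le h2 with heq | hlt
      · subst heq
        refine ⟨le_refl _, fun b _ => rfl, ?_⟩
        intro b hb1 hb2 hwb
        have := Q4 b hb1 hb2
        exact not_isWall_gap Q1 this.1 this.2 hwb
      · have h2' : i ≤ j := by omega
        have hjh : j ≤ h := by omega
        obtain ⟨m1, m2, m3⟩ := ihj hjh i h1 h2'
        refine ⟨le_trans m1 Q5, ?_, ?_⟩
        · intro b hb
          rw [Q3 b (le_trans hb (le_trans m1 Q5))]
          exact m2 b hb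
        · intro b hb1 hb2 hwb
          by_cases hbA : b ≤ A (j + 1)
          · rw [Q3 b hbA] at hwb
            exact m3 b hb1 hb2 hwb
          · push_neg at hbA
            have hbad := Q4 b hbA hb2
            have hwb' : isWall ((e : ℤ) * (p : ℤ) ^ z (j + 1)) (seq (j + 1) b) :=
              isWall_of_dvd (hFdvd i (j + 1) h1 (by omega) hj1) hwb
            exact not_isWall_gap Q1 hbad.1 hbad.2 hwb'
  -- identification of w with A
  have hwA : ∀ i, 1 ≤ i → i ≤ h → w i = A i := by
    intro i h1 h2
    obtain ⟨M1, M2, M3, M4, M5⟩ := main i h2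
    obtain ⟨Q1, Q2, _⟩ := M5 h1
    obtain ⟨t1, t2, t3⟩ := tr h (le_refl h) i h1 h2
    have hwall : isWall ((e : ℤ) * (p : ℤ) ^ z i) (seq h (A i)) := by
      rw [t2 (A i) (le_refl _), Q2]; exact Q1
    rcases hwi i h1 h2 with ⟨u1, u2, u3⟩ | ⟨u1, u2⟩
    · rcases Nat.lt_trichotomy (w i) (A i) with hc | hc | hc
      · exact absurd hwall (u3 (A i) hc M3)
      · exact hc
      · exact absurd u2 (t3 (w i) hc u1)
    · exact absurd hwall (u2 (A i) M3)
  -- relation on segments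
  have hrel : ∀ i, i ≤ h → ∀ b, A i ≤ b → b ≤ n → (i < h → b ≤ A (i + 1)) →
      seq h b = S i (π b) := by
    intro i hih b hb1 hb2 hb3
    rcases Nat.eq_or_lt_of_le hih with heq | hlt
    · subst heq
      exact (main i (le_refl i)).2.2.2.1 b hb1 hb2
    · have hb4 : b ≤ A (i + 1) := hb3 hlt
      obtain ⟨_, t2, _⟩ := tr h (le_refl h) (i + 1) (by omega) hlt
      rw [t2 b hb4]
      obtain ⟨M1, M2, M3, M4, M5⟩ := main (i + 1) hlt
      obtain ⟨_, _, Q3, _⟩ := M5 (by omega)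
      simp only [Nat.add_sub_cancel] at Q3
      rw [Q3 b hb4]
      exact (main i (by omega)).2.2.2.1 b hb1 hb2
  -- final assembly
  intro i hih
  rcases Nat.eq_zero_or_pos h with hh0 | hh1
  · -- trivial case h = 0
    have hi0 : i = 0 := by omega
    subst hi0
    rw [hh0, hseq0, pow_zero, one_mul]
  · -- identify left endpoint
    have hr : w i = A i := by
      rcases Nat.eq_zero_or_pos i with h0' | hpos
      · rw [h0', hw0, hA0]
      · exact hwA i hpos hih
    obtain ⟨c, hc1, hc2⟩ := motion i hih
    have hAin : A i ≤ n := (main i hih).2.2.1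
    have hηpath := (main h (le_refl h)).1
    -- wall at the left endpoint (when i ≥ 1)
    have hrwall : 1 ≤ i → isWall (e : ℤ) (seq h (A i)) := by
      intro h1
      obtain ⟨_, t2, _⟩ := tr h (le_refl h) i h1 hih
      obtain ⟨_, _, _, _, M5⟩ := main i hih
      obtain ⟨Q1, Q2, _⟩ := M5 h1
      rw [t2 (A i) (le_refl _), Q2]
      exact isWall_of_dvd (heF i) Q1
    -- case split on whether i < h or i = h
    have key : w (i + 1) ≤ n ∧ A i ≤ w (i + 1) ∧
        (∀ b, A i ≤ b → b ≤ w (i + 1) → seq h b = S i (π b)) ∧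
        (Odd i → isWall (e : ℤ) (π (A i)) ∧ isWall (e : ℤ) (π (w (i + 1)))) := by
      rcases Nat.eq_or_lt_of_le hih with heq | hlt
      · -- i = h
        subst heq
        have hπAi : isWall (e : ℤ) (π (A i)) := by
          have hrel0 : seq i (A i) = S i (π (A i)) :=
            (main i (le_refl i)).2.2.2.1 (A i) (le_refl _) hAin
          have := wall_transfer i hc1 (hpath.1 (A i) (Nat.zero_le _) hAin)
            (hηpath.1 (A i) (Nat.zero_le _) hAin)
            (show seq i (A i) = _ by rw [hrel0, hc2])
          exact this.mp (hrwall (by omega))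
        rcases hwlast with ⟨u1, u2, u3⟩ | ⟨u1, u2⟩
        · have hrs : A i ≤ w (i + 1) := by
            by_contra hcon
            push_neg at hcon
            exact (u3 (A i) hcon hAin) hπAi
          refine ⟨u1, hrs, ?_, fun _ => ⟨hπAi, u2⟩⟩
          intro b hb1 hb2
          exact hrel i (le_refl i) b hb1 (le_trans hb2 u1) (fun hc => absurd hc (lt_irrefl i))
        · exact absurd hπAi (u2 (A i) hAin)
      · -- i < h
        have hw1 : w (i + 1) = A (i + 1) := hwA (i + 1) (by omega) hlt
        obtain ⟨N1, N2, N3, N4, N5⟩ := main (i + 1) hlt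
        have hrs : A i ≤ A (i + 1) := by
          rcases Nat.eq_zero_or_pos i with h0' | hpos
          · rw [h0', hA0]; omega
          · exact (tr (i + 1) hlt i hpos (by omega)).1
        have hrel' : ∀ b, A i ≤ b → b ≤ w (i + 1) → seq h b = S i (π b) := by
          intro b hb1 hb2
          rw [hw1] at hb2
          exact hrel i hih b hb1 (le_trans hb2 N3) (fun _ => hb2)
        refine ⟨hw1 ▸ N3, hw1 ▸ hrs, hrel', ?_⟩
        intro hodd
        have h1 : 1 ≤ i := hodd.pos
        constructor
        · have hrel0 := hrel' (A i) (le_refl _) (hw1 ▸ hrs)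
          have := wall_transfer i hc1 (hpath.1 (A i) (Nat.zero_le _) hAin)
            (hηpath.1 (A i) (Nat.zero_le _) hAin)
            (by rw [hrel0, hc2])
          exact this.mp (hrwall h1)
        · have hswall : isWall (e : ℤ) (seq h (w (i + 1))) := by
            obtain ⟨_, t2, _⟩ := tr h (le_refl h) (i + 1) (by omega) hlt
            obtain ⟨Q1, Q2, _⟩ := N5 (by omega)
            rw [hw1, t2 (A (i + 1)) (le_refl _), Q2]
            exact isWall_of_dvd (heF (i + 1)) Q1
          have hrel0 := hrel' (w (i + 1)) (hw1 ▸ hrs) (le_refl _)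
          have := wall_transfer i hc1
            (hpath.1 (w (i + 1)) (Nat.zero_le _) (hw1 ▸ N3))
            (hηpath.1 (w (i + 1)) (Nat.zero_le _) (hw1 ▸ N3))
            (by rw [hrel0, hc2])
          exact this.mp hswall
    obtain ⟨K1, K2, K3, K4⟩ := key
    rw [hr]
    refine deg_motion he' i hc1 K2 ?_ ?_ ?_ ?_ ?_
    · intro b hb1 hb2
      exact hpath.1 b (Nat.zero_le _) (le_trans hb2 K1)
    · intro b hb1 hb2
      exact hηpath.1 b (Nat.zero_le _) (le_trans hb2 K1)
    · intro b hb1 hb2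
      exact hpath.2 b (Nat.zero_le _) (lt_of_lt_of_le hb2 K1)
    · intro b hb1 hb2
      rw [K3 b hb1 hb2, hc2]
    · exact K4
end
end
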